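/- arXiv:2105.01184 — 3 statements merged into one kernel-verified Lean document; each statement's English description precedes it below -/
import Mathlib

section
/- Consider the fully-interacted covariate-adjusted regressions: the unit regression of Y_{ws} on the four treatment indicators 1(Z_{ws}=z), z∈T, together with the interactions 1(Z_{ws}=z)·x_{ws} for each z∈T ('ols': unweighted; 'wls': weights p_{ws}(Z_{ws})^{-1}), and the aggregate regression of Û_w((A_w,b)) on the four indicators 1((A_w,b)=z) together with 1((A_w,b)=z)·v̂_w((A_w,b)), assuming each design matrix has full column rank. Let β_†,L(z) and γ_†,z denote the coefficient of indicator z and of its interaction term. Then for every realization of the assignment and every z∈T: β_ols,L(z) = Ŷ_sm(z) − x̂_sm(z)ᵀγ_ols,z, β_wls,L(z) = Ŷ_haj(z) − x̂_haj(z)ᵀγ_wls,z, and β_ag,L(z) = Ŷ_ht(z) − x̂_ht(z)ᵀγ_ag,z. -/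
open Finset Matrix Filter
open scoped Classical BigOperators

noncomputable section

namespace SplitPlotPaper

/-- The set of treatment combinations `T = {0,1} × {0,1}`, a pair of the levels of
factor A and factor B. -/
abbrev T : Type := Bool × Bool

section LS

variable {ι κ γ : Type*} [Fintype ι] [Fintype κ] [DecidableEq κ] [Fintype γ] [DecidableEq γ]

/-- The Gram matrix `Dᵀ Π D` of a (weighted) least-squares problem with design matrix `X`
and weights `π`. -/
def gram (X : Matrix ι κ ℝ) (π : ι → ℝ) : Matrix κ κ ℝ :=
  Matrix.of fun k k' => ∑ i, π i * X i k * X i k'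

/-- The (weighted) least-squares coefficient vector `(DᵀΠD)⁻¹ DᵀΠY`. -/
def lsCoef (X : Matrix ι κ ℝ) (π y : ι → ℝ) : κ → ℝ :=
  (gram X π)⁻¹.mulVec fun k => ∑ i, π i * X i k * y i

/-- Residuals of the (weighted) least-squares fit. -/
def lsResid (X : Matrix ι κ ℝ) (π y : ι → ℝ) (i : ι) : ℝ :=
  y i - ∑ k, X i k * lsCoef X π y k

/-- The cluster-robust covariance matrix
`(DᵀΠD)⁻¹ (Σ_c D_cᵀΠ_c e_c e_cᵀ Π_c D_c) (DᵀΠD)⁻¹` for clustering map `c`. -/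
def clusterCov (X : Matrix ι κ ℝ) (π y : ι → ℝ) (c : ι → γ) : Matrix κ κ ℝ :=
  (gram X π)⁻¹ *
    (Matrix.of fun k k' =>
      ∑ g : γ, (∑ i, if c i = g then π i * X i k * lsResid X π y i else 0) *
        (∑ i, if c i = g then π i * X i k' * lsResid X π y i else 0)) *
    (gram X π)⁻¹

/-- The heteroskedasticity-robust (sandwich) covariance matrix. -/
def hcCov (X : Matrix ι κ ℝ) (π y : ι → ℝ) : Matrix κ κ ℝ :=
  (gram X π)⁻¹ *
    (Matrix.of fun k k' => ∑ i, (π i) ^ 2 * (lsResid X π y i) ^ 2 * X i k * X i k') *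
    (gram X π)⁻¹

end LS

/-- A `2²` split-plot design: `W = W0 + W1` whole-plots, whole-plot `w` containing
`M w = M0 w + M1 w` sub-plots, together with fixed potential outcomes `Y`. -/
structure Design where
  W0 : ℕ
  W1 : ℕ
  hW0 : 2 ≤ W0
  hW1 : 2 ≤ W1
  M0 : Fin (W0 + W1) → ℕ
  M1 : Fin (W0 + W1) → ℕ
  hM0 : ∀ w, 2 ≤ M0 w
  hM1 : ∀ w, 2 ≤ M1 w
  Y : (w : Fin (W0 + W1)) → Fin (M0 w + M1 w) → T → ℝ

namespace Design

variable (d : Design)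

/-- Number of whole-plots. -/
abbrev W : ℕ := d.W0 + d.W1

/-- Size of whole-plot `w`. -/
abbrev M (w : Fin d.W) : ℕ := d.M0 w + d.M1 w

/-- Total number of units. -/
def N : ℕ := ∑ w, d.M w

/-- Number of whole-plots assigned level `a` of factor A. -/
def Wa (a : Bool) : ℕ := if a then d.W1 else d.W0

/-- Number of units of whole-plot `w` assigned level `b` of factor B. -/
def Mb (w : Fin d.W) (b : Bool) : ℕ := if b then d.M1 w else d.M0 w

/-- `p_a = W_a / W`. -/
def p (a : Bool) : ℝ := (d.Wa a : ℝ) / (d.W : ℝ)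

/-- `q_{wb} = M_{wb} / M_w`. -/
def q (w : Fin d.W) (b : Bool) : ℝ := (d.Mb w b : ℝ) / (d.M w : ℝ)

/-- Inclusion probability `p_{ws}(z) = p_a q_{wb}` for `z = (a,b)`. -/
def prob (w : Fin d.W) (z : T) : ℝ := d.p z.1 * d.q w z.2

/-- Whole-plot size factor `α_w = W M_w / N`. -/
def alpha (w : Fin d.W) : ℝ := (d.W : ℝ) * (d.M w : ℝ) / (d.N : ℝ)

/-- An assignment: a level of factor A for each whole-plot and a level of factor B
for each unit. -/
abbrev Assign : Type := (Fin d.W → Bool) × ((w : Fin d.W) → Fin (d.M w) → Bool)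

/-- The set of assignments realizable under split-plot randomization: exactly `W1`
whole-plots receive level 1 of factor A, and exactly `M1 w` units of whole-plot `w`
receive level 1 of factor B.  Split-plot randomization is uniform on this set. -/
def Ω : Finset d.Assign :=
  Finset.univ.filter fun ω =>
    ((Finset.univ.filter fun w => ω.1 w = true).card = d.W1) ∧
    (∀ w, (Finset.univ.filter fun s => ω.2 w s = true).card = d.M1 w)

/-- Design-based expectation: average over the uniform distribution on `Ω`. -/
def expect (f : d.Assign → ℝ) : ℝ := (∑ ω ∈ d.Ω, f ω) / (d.Ω.card : ℝ)

/-- Design-based covariance. -/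
def cov (f g : d.Assign → ℝ) : ℝ :=
  d.expect (fun ω => f ω * g ω) - d.expect f * d.expect g

/-- Conditional expectation given an event `E` on assignments. -/
def cexpect (E : d.Assign → Prop) (f : d.Assign → ℝ) : ℝ :=
  (∑ ω ∈ d.Ω.filter E, f ω) / ((d.Ω.filter E).card : ℝ)

/-- Conditional covariance given an event `E` on assignments. -/
def ccov (E : d.Assign → Prop) (f g : d.Assign → ℝ) : ℝ :=
  d.cexpect E (fun ω => f ω * g ω) - d.cexpect E f * d.cexpect E g

/-- Treatment `Z_{ws} = (A_w, B_{ws})` received by unit `(w,s)`. -/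
def Z (ω : d.Assign) (w : Fin d.W) (s : Fin (d.M w)) : T := (ω.1 w, ω.2 w s)

/-- Observed outcome `Y_{ws} = Y_{ws}(Z_{ws})`. -/
def Yobs (ω : d.Assign) (w : Fin d.W) (s : Fin (d.M w)) : ℝ := d.Y w s (d.Z ω w s)

/-- Horvitz–Thompson estimator `Ŷ_ht(z)`. -/
def Yht (ω : d.Assign) (z : T) : ℝ :=
  (d.N : ℝ)⁻¹ * ∑ w, ∑ s, if d.Z ω w s = z then (d.prob w z)⁻¹ * d.Yobs ω w s else 0

/-- `1̂_ht(z)`: the Horvitz–Thompson estimator of the constant 1. -/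
def oneHt (ω : d.Assign) (z : T) : ℝ :=
  (d.N : ℝ)⁻¹ * ∑ w, ∑ s, if d.Z ω w s = z then (d.prob w z)⁻¹ else 0

/-- Hajek estimator `Ŷ_haj(z) = Ŷ_ht(z)/1̂_ht(z)`. -/
def Yhaj (ω : d.Assign) (z : T) : ℝ := d.Yht ω z / d.oneHt ω z

/-- Sample-mean estimator `Ŷ_sm(z)`. -/
def Ysm (ω : d.Assign) (z : T) : ℝ :=
  (∑ w, ∑ s, if d.Z ω w s = z then d.Yobs ω w s else 0) /
    (∑ w, ∑ s, if d.Z ω w s = z then (1 : ℝ) else 0)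

/-- Whole-plot sample mean `Ŷ_w(z)` (zero when whole-plot `w` has no units under `z`). -/
def Yw (ω : d.Assign) (w : Fin d.W) (z : T) : ℝ :=
  (d.Mb w z.2 : ℝ)⁻¹ * ∑ s, if d.Z ω w s = z then d.Yobs ω w s else 0

/-- Scaled whole-plot sample mean `Û_w(z) = α_w Ŷ_w(z)`. -/
def Uw (ω : d.Assign) (w : Fin d.W) (z : T) : ℝ := d.alpha w * d.Yw ω w z

/-- Finite-population average `Ȳ(z)`. -/
def Ybar (z : T) : ℝ := (d.N : ℝ)⁻¹ * ∑ w, ∑ s, d.Y w s z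

/-- Whole-plot average potential outcome `Ȳ_w(z)`. -/
def Ybarw (w : Fin d.W) (z : T) : ℝ := (d.M w : ℝ)⁻¹ * ∑ s, d.Y w s z

/-- Scaled whole-plot total `U_w(z) = α_w Ȳ_w(z)`. -/
def U (w : Fin d.W) (z : T) : ℝ := d.alpha w * d.Ybarw w z

/-- Between whole-plot covariance `S_ht(z,z')`. -/
def Sht (z z' : T) : ℝ :=
  ((d.W : ℝ) - 1)⁻¹ *
    ∑ w, (d.alpha w * d.Ybarw w z - d.Ybar z) * (d.alpha w * d.Ybarw w z' - d.Ybar z')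

/-- Between whole-plot covariance `S_haj(z,z')`. -/
def Shaj (z z' : T) : ℝ :=
  ((d.W : ℝ) - 1)⁻¹ *
    ∑ w, (d.alpha w) ^ 2 * (d.Ybarw w z - d.Ybar z) * (d.Ybarw w z' - d.Ybar z')

/-- Within whole-plot covariance `S_w(z,z')`. -/
def Sw (w : Fin d.W) (z z' : T) : ℝ :=
  ((d.M w : ℝ) - 1)⁻¹ * (d.alpha w) ^ 2 *
    ∑ s, (d.Y w s z - d.Ybarw w z) * (d.Y w s z' - d.Ybarw w z')

/-- Entry `(z,z')` of `H = diag(p₀⁻¹,p₁⁻¹) ⊗ J₂ − J₄`. -/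
def Hmat (z z' : T) : ℝ := (if z.1 = z'.1 then (d.p z.1)⁻¹ else 0) - 1

/-- Entry `(z,z')` of `H_w = diag(p₀⁻¹,p₁⁻¹) ⊗ (diag(q_{w0}⁻¹,q_{w1}⁻¹) − J₂)`,
i.e. `1(a=a')·p_a⁻¹·(q_{wb}⁻¹·1(z=z') − 1)`. -/
def Hw (w : Fin d.W) (z z' : T) : ℝ :=
  if z.1 = z'.1 then (d.p z.1)⁻¹ * ((if z = z' then (d.q w z.2)⁻¹ else 0) - 1) else 0

/-- `Ψ(z,z') = W⁻¹ Σ_w M_w⁻¹ H_w(z,z') S_w(z,z')`. -/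
def Psi (z z' : T) : ℝ := (d.W : ℝ)⁻¹ * ∑ w, (d.M w : ℝ)⁻¹ * d.Hw w z z' * d.Sw w z z'

/-- Sample analog `Ŝ_ht(z,z')` (for `z,z'` sharing the same A-level `z.1`). -/
def ShtHat (ω : d.Assign) (z z' : T) : ℝ :=
  ((d.Wa z.1 : ℝ) - 1)⁻¹ *
    ∑ w, if ω.1 w = z.1 then
        (d.alpha w * d.Yw ω w z - d.Yht ω z) * (d.alpha w * d.Yw ω w z' - d.Yht ω z')
      else 0

/-- Sample analog `Ŝ_haj(z,z')` (for `z,z'` sharing the same A-level `z.1`). -/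
def ShajHat (ω : d.Assign) (z z' : T) : ℝ :=
  ((d.Wa z.1 : ℝ) - 1)⁻¹ *
    ∑ w, if ω.1 w = z.1 then
        (d.alpha w) ^ 2 * (d.Yw ω w z - d.Yhaj ω z) * (d.Yw ω w z' - d.Yhaj ω z')
      else 0

/-- Covariance estimator `V̂_ht` (block-diagonal in the A-levels). -/
def Vht (ω : d.Assign) : Matrix T T ℝ :=
  Matrix.of fun z z' => if z.1 = z'.1 then (d.Wa z.1 : ℝ)⁻¹ * d.ShtHat ω z z' else 0

/-- Covariance estimator `V̂_haj` (block-diagonal in the A-levels). -/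
def Vhaj (ω : d.Assign) : Matrix T T ℝ :=
  Matrix.of fun z z' => if z.1 = z'.1 then (d.Wa z.1 : ℝ)⁻¹ * d.ShajHat ω z z' else 0

/-- Index set of units. -/
abbrev Idx : Type := (w : Fin d.W) × Fin (d.M w)

/-- Design matrix of the unit regression on the four treatment indicators. -/
def Dunit (ω : d.Assign) : Matrix d.Idx T ℝ :=
  Matrix.of fun i z => if d.Z ω i.1 i.2 = z then 1 else 0

/-- Observed outcome vector, indexed by units. -/
def Yv (ω : d.Assign) : d.Idx → ℝ := fun i => d.Yobs ω i.1 i.2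

/-- Inverse-probability weights `p_{ws}(Z_{ws})⁻¹`. -/
def wgt (ω : d.Assign) : d.Idx → ℝ := fun i => (d.prob i.1 (d.Z ω i.1 i.2))⁻¹

/-- Index set of the aggregate regression: pairs `(w,b)`. -/
abbrev AgIdx : Type := Fin d.W × Bool

/-- Design matrix of the aggregate regression on the four treatment indicators. -/
def Dag (ω : d.Assign) : Matrix d.AgIdx T ℝ :=
  Matrix.of fun i z => if (ω.1 i.1, i.2) = z then 1 else 0

/-- Outcome vector of the aggregate regression: `Û_w((A_w, b))`. -/
def Uag (ω : d.Assign) : d.AgIdx → ℝ := fun i => d.Uw ω i.1 (ω.1 i.1, i.2)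

/-- Clustering of units by whole-plot. -/
def clUnit : d.Idx → Fin d.W := fun i => i.1

/-- Clustering of aggregate observations by whole-plot. -/
def clAg : d.AgIdx → Fin d.W := fun i => i.1

/-- OLS coefficients `β_ols` of the unit regression. -/
def betaOls (ω : d.Assign) : T → ℝ := lsCoef (d.Dunit ω) (fun _ => 1) (d.Yv ω)

/-- WLS coefficients `β_wls` of the unit regression with inverse probability weights. -/
def betaWls (ω : d.Assign) : T → ℝ := lsCoef (d.Dunit ω) (d.wgt ω) (d.Yv ω)

/-- OLS coefficients `β_ag` of the aggregate regression. -/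
def betaAg (ω : d.Assign) : T → ℝ := lsCoef (d.Dag ω) (fun _ => 1) (d.Uag ω)

/-- Cluster-robust covariance `Ṽ_ols` of the unweighted unit regression. -/
def Vols (ω : d.Assign) : Matrix T T ℝ :=
  clusterCov (d.Dunit ω) (fun _ => 1) (d.Yv ω) d.clUnit

/-- Cluster-robust covariance `Ṽ_wls` of the weighted unit regression. -/
def Vwls (ω : d.Assign) : Matrix T T ℝ :=
  clusterCov (d.Dunit ω) (d.wgt ω) (d.Yv ω) d.clUnit

/-- Cluster-robust covariance `Ṽ_ag` of the aggregate regression. -/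
def VagCR (ω : d.Assign) : Matrix T T ℝ :=
  clusterCov (d.Dag ω) (fun _ => 1) (d.Uag ω) d.clAg

section Covariates

variable {J : ℕ}

/-- Horvitz–Thompson estimator of the covariate means. -/
def xht (x : (w : Fin d.W) → Fin (d.M w) → Fin J → ℝ) (ω : d.Assign) (z : T) (j : Fin J) : ℝ :=
  (d.N : ℝ)⁻¹ * ∑ w, ∑ s, if d.Z ω w s = z then (d.prob w z)⁻¹ * x w s j else 0

/-- Hajek estimator of the covariate means. -/
def xhaj (x : (w : Fin d.W) → Fin (d.M w) → Fin J → ℝ) (ω : d.Assign) (z : T) (j : Fin J) : ℝ :=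
  d.xht x ω z j / d.oneHt ω z

/-- Sample-mean estimator of the covariate means. -/
def xsm (x : (w : Fin d.W) → Fin (d.M w) → Fin J → ℝ) (ω : d.Assign) (z : T) (j : Fin J) : ℝ :=
  (∑ w, ∑ s, if d.Z ω w s = z then x w s j else 0) /
    (∑ w, ∑ s, if d.Z ω w s = z then (1 : ℝ) else 0)

/-- Whole-plot sample mean of the covariates `x̂_w(z)`. -/
def xw (x : (w : Fin d.W) → Fin (d.M w) → Fin J → ℝ) (ω : d.Assign) (w : Fin d.W) (z : T)
    (j : Fin J) : ℝ :=
  (d.Mb w z.2 : ℝ)⁻¹ * ∑ s, if d.Z ω w s = z then x w s j else 0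

/-- Scaled whole-plot covariate total `v̂_w(z) = α_w x̂_w(z)`. -/
def vw (x : (w : Fin d.W) → Fin (d.M w) → Fin J → ℝ) (ω : d.Assign) (w : Fin d.W) (z : T)
    (j : Fin J) : ℝ :=
  d.alpha w * d.xw x ω w z j

/-- Design matrix of the additive covariate-adjusted unit regression. -/
def DunitF (x : (w : Fin d.W) → Fin (d.M w) → Fin J → ℝ) (ω : d.Assign) :
    Matrix d.Idx (T ⊕ Fin J) ℝ :=
  Matrix.of fun i k =>
    Sum.elim (fun z => if d.Z ω i.1 i.2 = z then (1 : ℝ) else 0) (fun j => x i.1 i.2 j) k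

/-- Design matrix of the additive covariate-adjusted aggregate regression. -/
def DagF (x : (w : Fin d.W) → Fin (d.M w) → Fin J → ℝ) (ω : d.Assign) :
    Matrix d.AgIdx (T ⊕ Fin J) ℝ :=
  Matrix.of fun i k =>
    Sum.elim (fun z => if (ω.1 i.1, i.2) = z then (1 : ℝ) else 0)
      (fun j => d.vw x ω i.1 (ω.1 i.1, i.2) j) k

/-- Design matrix of the fully-interacted covariate-adjusted unit regression. -/
def DunitL (x : (w : Fin d.W) → Fin (d.M w) → Fin J → ℝ) (ω : d.Assign) :
    Matrix d.Idx (T ⊕ T × Fin J) ℝ :=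
  Matrix.of fun i k =>
    Sum.elim (fun z => if d.Z ω i.1 i.2 = z then (1 : ℝ) else 0)
      (fun zj => if d.Z ω i.1 i.2 = zj.1 then x i.1 i.2 zj.2 else 0) k

/-- Design matrix of the fully-interacted covariate-adjusted aggregate regression. -/
def DagL (x : (w : Fin d.W) → Fin (d.M w) → Fin J → ℝ) (ω : d.Assign) :
    Matrix d.AgIdx (T ⊕ T × Fin J) ℝ :=
  Matrix.of fun i k =>
    Sum.elim (fun z => if (ω.1 i.1, i.2) = z then (1 : ℝ) else 0)
      (fun zj => if (ω.1 i.1, i.2) = zj.1 then d.vw x ω i.1 (ω.1 i.1, i.2) zj.2 else 0) k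

end Covariates

/-- Centered factor-A indicator `A_w − 1/2`. -/
def Ac (ω : d.Assign) (w : Fin d.W) : ℝ := (if ω.1 w then 1 else 0) - 1 / 2

/-- Centered factor-B indicator `B_{ws} − 1/2`. -/
def Bcu (ω : d.Assign) (i : d.Idx) : ℝ := (if ω.2 i.1 i.2 then 1 else 0) - 1 / 2

/-- Design matrix of the factor-based unit regression
`Y ~ 1 + (A−1/2) + (B−1/2) + (A−1/2)(B−1/2)`. -/
def Funit (ω : d.Assign) : Matrix d.Idx (Fin 4) ℝ :=
  Matrix.of fun i => ![1, d.Ac ω i.1, d.Bcu ω i, d.Ac ω i.1 * d.Bcu ω i]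

/-- Design matrix of the factor-based aggregate regression
`Û ~ 1 + (A−1/2) + (b−1/2) + (A−1/2)(b−1/2)`. -/
def Fag (ω : d.Assign) : Matrix d.AgIdx (Fin 4) ℝ :=
  Matrix.of fun i =>
    ![1, d.Ac ω i.1, (if i.2 then 1 else 0) - 1 / 2,
      d.Ac ω i.1 * ((if i.2 then 1 else 0) - 1 / 2)]

end Design

/-- The contrast matrix `G₀` with rows `g_A`, `g_B`, `g_AB`. -/
def G0 : Matrix (Fin 3) T ℝ :=
  Matrix.of fun k z =>
    ![(if z.1 then (1 : ℝ) else -1) / 2,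
      (if z.2 then (1 : ℝ) else -1) / 2,
      (if z.1 then (-1 : ℝ) else 1) * (if z.2 then (-1 : ℝ) else 1)] k



section Aux

lemma keyLemma {ι : Type*} [Fintype ι] {J : ℕ}
    (X : Matrix ι (T ⊕ T × Fin J) ℝ) (π y : ι → ℝ) (t : ι → T) (u : ι → Fin J → ℝ)
    (hX1 : ∀ i z, X i (Sum.inl z) = if t i = z then 1 else 0)
    (hX2 : ∀ i zj, X i (Sum.inr zj) = if t i = zj.1 then u i zj.2 else 0)
    (hπ : ∀ i, 0 < π i)
    (hdet : IsUnit (gram X π).det) (z : T) :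
    lsCoef X π y (Sum.inl z)
      = (∑ i, if t i = z then π i * y i else 0) / (∑ i, if t i = z then π i else 0)
        - ∑ j, ((∑ i, if t i = z then π i * u i j else 0) /
            (∑ i, if t i = z then π i else 0)) * lsCoef X π y (Sum.inr (z, j)) := by
  have hS1 : (∑ i, if t i = z then π i else 0) ≠ 0 := by
    intro h0
    have hall : ∀ i, t i ≠ z := by
      intro i hiz
      have hnn : ∀ j ∈ Finset.univ (α := ι), (0:ℝ) ≤ if t j = z then π j else 0 := by
        intro j _
        split
        · exact (hπ j).le
        · exact le_refl 0
      have := (Finset.sum_eq_zero_iff_of_nonneg hnn).mp h0 i (Finset.mem_univ i)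
      rw [if_pos hiz] at this
      exact (hπ i).ne' this
    have hcol : ∀ k, gram X π k (Sum.inl z) = 0 := by
      intro k
      simp only [gram, Matrix.of_apply]
      apply Finset.sum_eq_zero
      intro i _
      rw [hX1, if_neg (hall i)]
      ring
    have hdz : (gram X π).det = 0 := Matrix.det_eq_zero_of_column_eq_zero (Sum.inl z) hcol
    rw [hdz] at hdet
    simp at hdet
  have hmv : ∀ k, ∑ k', gram X π k k' * lsCoef X π y k' = ∑ i, π i * X i k * y i := by
    intro k
    have h : (gram X π).mulVec (lsCoef X π y) = fun k => ∑ i, π i * X i k * y i := by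
      unfold lsCoef
      rw [Matrix.mulVec_mulVec, Matrix.mul_nonsing_inv _ hdet, Matrix.one_mulVec]
    have := congrFun h k
    simpa [Matrix.mulVec, dotProduct] using this
  have heq := hmv (Sum.inl z)
  rw [Fintype.sum_sum_type] at heq
  have h1 : ∑ z' : T, gram X π (Sum.inl z) (Sum.inl z') * lsCoef X π y (Sum.inl z')
      = (∑ i, if t i = z then π i else 0) * lsCoef X π y (Sum.inl z) := by
    rw [Finset.sum_eq_single z]
    · congr 1
      simp only [gram, Matrix.of_apply]
      apply Finset.sum_congr rfl
      intro i _
      rw [hX1]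
      split <;> simp
    · intro z' _ hz'
      have hg : gram X π (Sum.inl z) (Sum.inl z') = 0 := by
        simp only [gram, Matrix.of_apply]
        apply Finset.sum_eq_zero
        intro i _
        rw [hX1, hX1]
        by_cases h : t i = z
        · rw [if_pos h, if_neg (by rw [h]; exact fun hh => hz' hh.symm)]
          ring
        · rw [if_neg h]; ring
      rw [hg, zero_mul]
    · simp
  have h2 : ∑ p : T × Fin J, gram X π (Sum.inl z) (Sum.inr p) * lsCoef X π y (Sum.inr p)
      = ∑ j, (∑ i, if t i = z then π i * u i j else 0) * lsCoef X π y (Sum.inr (z, j)) := by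
    rw [Fintype.sum_prod_type, Finset.sum_eq_single z]
    · apply Finset.sum_congr rfl
      intro j _
      congr 1
      simp only [gram, Matrix.of_apply]
      apply Finset.sum_congr rfl
      intro i _
      rw [hX1, hX2]
      by_cases h : t i = z
      · rw [if_pos h, if_pos h, if_pos h]; ring
      · rw [if_neg h, if_neg h, if_neg h]; ring
    · intro z' _ hz'
      apply Finset.sum_eq_zero
      intro j _
      have hg : gram X π (Sum.inl z) (Sum.inr (z', j)) = 0 := by
        simp only [gram, Matrix.of_apply]
        apply Finset.sum_eq_zero
        intro i _
        rw [hX1, hX2]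
        by_cases h : t i = z
        · rw [if_pos h, if_neg (by rw [h]; exact fun hh => hz' hh.symm)]
          ring
        · rw [if_neg h]; ring
      rw [hg, zero_mul]
    · simp
  have h3 : ∑ i, π i * X i (Sum.inl z) * y i = ∑ i, if t i = z then π i * y i else 0 := by
    apply Finset.sum_congr rfl
    intro i _
    rw [hX1]
    split <;> ring
  rw [h1, h2, h3] at heq
  simp only [div_mul_eq_mul_div, ← Finset.sum_div, ← sub_div]
  rw [eq_div_iff hS1]
  linear_combination heq

lemma sum_ite_mul' {ι : Type*} [Fintype ι] (p : ι → Prop) [DecidablePred p] (c : ℝ)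
    (f : ι → ℝ) :
    (∑ i, if p i then c * f i else 0) = c * ∑ i, if p i then f i else 0 := by
  rw [Finset.mul_sum]
  exact Finset.sum_congr rfl fun i _ => by split <;> simp

lemma bool_collapse (a : Bool) (z : T) (f : Bool → ℝ) :
    (∑ b : Bool, if (a, b) = z then f b else 0) = if a = z.1 then f z.2 else 0 := by
  rcases z with ⟨za, zb⟩
  cases za <;> cases zb <;> cases a <;> simp [Prod.ext_iff]

namespace Design

variable (d : Design)

lemma W_pos : 0 < d.W := by have := d.hW0; have := d.hW1; show 0 < d.W0 + d.W1; omega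

lemma M_pos (w : Fin d.W) : 0 < d.M w := by have := d.hM0 w; have := d.hM1 w; show 0 < d.M0 w + d.M1 w; omega

lemma N_pos : 0 < d.N := by
  refine Finset.sum_pos (fun w _ => d.M_pos w) ⟨⟨0, d.W_pos⟩, Finset.mem_univ _⟩

lemma Wa_pos (a : Bool) : 0 < d.Wa a := by
  have h0 := d.hW0; have h1 := d.hW1
  unfold Design.Wa; split <;> omega

lemma Mb_pos (w : Fin d.W) (b : Bool) : 0 < d.Mb w b := by
  have h0 := d.hM0 w; have h1 := d.hM1 w
  unfold Design.Mb; split <;> omega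

lemma prob_pos (w : Fin d.W) (z : T) : 0 < d.prob w z := by
  have h1 : (0:ℝ) < d.Wa z.1 := by exact_mod_cast d.Wa_pos z.1
  have h2 : (0:ℝ) < d.W := by exact_mod_cast d.W_pos
  have h3 : (0:ℝ) < d.Mb w z.2 := by exact_mod_cast d.Mb_pos w z.2
  have h4 : (0:ℝ) < d.M w := by exact_mod_cast d.M_pos w
  exact mul_pos (div_pos h1 h2) (div_pos h3 h4)

lemma sigma_sum (g : d.Idx → ℝ) : ∑ i : d.Idx, g i = ∑ w, ∑ s, g ⟨w, s⟩ := by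
  rw [← Finset.univ_sigma_univ, Finset.sum_sigma]

lemma ag_den (ω : d.Assign) (hω : ω ∈ d.Ω) (z : T) :
    (∑ i : d.AgIdx, if (ω.1 i.1, i.2) = z then (1:ℝ) else 0) = (d.Wa z.1 : ℝ) := by
  obtain ⟨-, h1, -⟩ := Finset.mem_filter.mp hω
  rw [Fintype.sum_prod_type]
  rw [Finset.sum_congr rfl (fun w _ => bool_collapse (ω.1 w) z (fun _ => (1:ℝ)))]
  rw [Finset.sum_boole]
  have hcards : (Finset.univ.filter fun w => ω.1 w = false).card = d.W0 := by
    have h3 := Finset.card_filter_add_card_filter_not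
      (s := (Finset.univ : Finset (Fin d.W))) (p := fun w => ω.1 w = true)
    have he : (Finset.univ.filter fun w : Fin d.W => ω.1 w = false)
        = (Finset.univ.filter fun w : Fin d.W => ¬ (ω.1 w = true)) := by
      apply Finset.filter_congr
      intro w _
      simp
    rw [he]
    have hu : (Finset.univ : Finset (Fin d.W)).card = d.W0 + d.W1 := by
      simp [Design.W]
    omega
  rcases z with ⟨a, b⟩
  cases a
  · simp only [Design.Wa]
    rw [hcards]
    norm_num
  · simp only [Design.Wa]
    rw [h1]
    norm_num

lemma ag_ratio (ω : d.Assign) (hω : ω ∈ d.Ω) (z : T)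
    (g : (w : Fin d.W) → Fin (d.M w) → ℝ) :
    (∑ i : d.AgIdx, if (ω.1 i.1, i.2) = z then
        d.alpha i.1 * ((d.Mb i.1 z.2 : ℝ)⁻¹ * ∑ s, if d.Z ω i.1 s = z then g i.1 s else 0)
      else 0)
      / (∑ i : d.AgIdx, if (ω.1 i.1, i.2) = z then (1:ℝ) else 0)
    = (d.N : ℝ)⁻¹ * ∑ w, ∑ s, if d.Z ω w s = z then (d.prob w z)⁻¹ * g w s else 0 := by
  rw [d.ag_den ω hω z]
  have hWa : ((d.Wa z.1 : ℝ)) ≠ 0 := by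
    exact_mod_cast (d.Wa_pos z.1).ne'
  rw [div_eq_iff hWa, Finset.mul_sum, Finset.sum_mul, Fintype.sum_prod_type]
  rw [Finset.sum_congr rfl (fun w _ => bool_collapse (ω.1 w) z _)]
  apply Finset.sum_congr rfl
  intro w _
  by_cases hA : ω.1 w = z.1
  · rw [if_pos hA, sum_ite_mul']
    have hW : ((d.W : ℝ)) ≠ 0 := by exact_mod_cast d.W_pos.ne'
    have hM : ((d.M w : ℝ)) ≠ 0 := by exact_mod_cast (d.M_pos w).ne'
    have hN : ((d.N : ℝ)) ≠ 0 := by exact_mod_cast d.N_pos.ne'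
    have hMb : ((d.Mb w z.2 : ℝ)) ≠ 0 := by exact_mod_cast (d.Mb_pos w z.2).ne'
    have hc : d.alpha w * (d.Mb w z.2 : ℝ)⁻¹
        = (d.N : ℝ)⁻¹ * (d.prob w z)⁻¹ * (d.Wa z.1 : ℝ) := by
      unfold Design.alpha Design.prob Design.p Design.q
      field_simp
    linear_combination (∑ s, if d.Z ω w s = z then g w s else 0) * hc
  · rw [if_neg hA]
    have h0 : (∑ s, if d.Z ω w s = z then (d.prob w z)⁻¹ * g w s else 0) = 0 := by
      apply Finset.sum_eq_zero
      intro s _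
      rw [if_neg]
      intro h
      exact hA (congrArg Prod.fst h)
    rw [h0]
    ring

end Design

end Aux

/-- Fully-interacted covariate-adjusted regressions.  With
full-column-rank design matrices (expressed via invertibility of the Gram matrices),
for every `z ∈ T`: `β_ols,L(z) = Ŷ_sm(z) − x̂_sm(z)ᵀγ_ols,z`,
`β_wls,L(z) = Ŷ_haj(z) − x̂_haj(z)ᵀγ_wls,z`, and
`β_ag,L(z) = Ŷ_ht(z) − x̂_ht(z)ᵀγ_ag,z`. -/
theorem interacted_adjustment (d : Design) {J : ℕ}
    (x : (w : Fin d.W) → Fin (d.M w) → Fin J → ℝ)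
    (hx : ∀ j, (∑ w, ∑ s, x w s j) = 0)
    (ω : d.Assign) (hω : ω ∈ d.Ω)
    (hols : IsUnit (gram (d.DunitL x ω) (fun _ => 1)).det)
    (hwls : IsUnit (gram (d.DunitL x ω) (d.wgt ω)).det)
    (hag : IsUnit (gram (d.DagL x ω) (fun _ => 1)).det) :
    (∀ z : T,
      lsCoef (d.DunitL x ω) (fun _ => 1) (d.Yv ω) (Sum.inl z)
        = d.Ysm ω z - ∑ j, d.xsm x ω z j *
            lsCoef (d.DunitL x ω) (fun _ => 1) (d.Yv ω) (Sum.inr (z, j))) ∧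
    (∀ z : T,
      lsCoef (d.DunitL x ω) (d.wgt ω) (d.Yv ω) (Sum.inl z)
        = d.Yhaj ω z - ∑ j, d.xhaj x ω z j *
            lsCoef (d.DunitL x ω) (d.wgt ω) (d.Yv ω) (Sum.inr (z, j))) ∧
    (∀ z : T,
      lsCoef (d.DagL x ω) (fun _ => 1) (d.Uag ω) (Sum.inl z)
        = d.Yht ω z - ∑ j, d.xht x ω z j *
            lsCoef (d.DagL x ω) (fun _ => 1) (d.Uag ω) (Sum.inr (z, j))) := by
  refine ⟨fun z => ?_, fun z => ?_, fun z => ?_⟩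
  · -- OLS
    have hk := keyLemma (d.DunitL x ω) (fun _ => 1) (d.Yv ω)
      (fun i => d.Z ω i.1 i.2) (fun i j => x i.1 i.2 j)
      (fun i z => rfl) (fun i zj => rfl) (fun i => one_pos) hols z
    rw [hk]
    congr 1
    · unfold Design.Ysm
      congr 1
      · rw [d.sigma_sum]
        refine Finset.sum_congr rfl fun w _ => Finset.sum_congr rfl fun s _ => ?_
        split
        · simp [Design.Yv]
        · rfl
      · rw [d.sigma_sum]
    · refine Finset.sum_congr rfl fun j _ => ?_
      congr 1
      unfold Design.xsm
      congr 1
      · rw [d.sigma_sum]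
        refine Finset.sum_congr rfl fun w _ => Finset.sum_congr rfl fun s _ => ?_
        split
        · simp
        · rfl
      · rw [d.sigma_sum]
  · -- WLS
    have hk := keyLemma (d.DunitL x ω) (d.wgt ω) (d.Yv ω)
      (fun i => d.Z ω i.1 i.2) (fun i j => x i.1 i.2 j)
      (fun i z => rfl) (fun i zj => rfl)
      (fun i => inv_pos.mpr (d.prob_pos _ _)) hwls z
    rw [hk]
    have hNi : ((d.N : ℝ))⁻¹ ≠ 0 := inv_ne_zero (by exact_mod_cast d.N_pos.ne')
    congr 1
    · unfold Design.Yhaj Design.Yht Design.oneHt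
      rw [mul_div_mul_left _ _ hNi]
      congr 1
      · rw [d.sigma_sum]
        refine Finset.sum_congr rfl fun w _ => Finset.sum_congr rfl fun s _ => ?_
        split
        case isTrue h => simp [Design.wgt, Design.Yv, h]
        case isFalse => rfl
      · rw [d.sigma_sum]
        refine Finset.sum_congr rfl fun w _ => Finset.sum_congr rfl fun s _ => ?_
        split
        case isTrue h => simp [Design.wgt, h]
        case isFalse => rfl
    · refine Finset.sum_congr rfl fun j _ => ?_
      congr 1
      unfold Design.xhaj Design.xht Design.oneHt
      rw [mul_div_mul_left _ _ hNi]
      congr 1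
      · rw [d.sigma_sum]
        refine Finset.sum_congr rfl fun w _ => Finset.sum_congr rfl fun s _ => ?_
        split
        case isTrue h => simp [Design.wgt, h]
        case isFalse => rfl
      · rw [d.sigma_sum]
        refine Finset.sum_congr rfl fun w _ => Finset.sum_congr rfl fun s _ => ?_
        split
        case isTrue h => simp [Design.wgt, h]
        case isFalse => rfl
  · -- aggregate
    have hk := keyLemma (d.DagL x ω) (fun _ => 1) (d.Uag ω)
      (fun i => (ω.1 i.1, i.2)) (fun i j => d.vw x ω i.1 (ω.1 i.1, i.2) j)
      (fun i z => rfl) (fun i zj => rfl) (fun i => one_pos) hag z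
    rw [hk]
    congr 1
    · have hnum : (∑ i : d.AgIdx, if (ω.1 i.1, i.2) = z then (1:ℝ) * d.Uag ω i else 0)
          = ∑ i : d.AgIdx, if (ω.1 i.1, i.2) = z then
              d.alpha i.1 * ((d.Mb i.1 z.2 : ℝ)⁻¹ *
                ∑ s, if d.Z ω i.1 s = z then d.Yobs ω i.1 s else 0) else 0 := by
        refine Finset.sum_congr rfl fun i _ => ?_
        split
        case isTrue h =>
          rw [one_mul]
          show d.Uw ω i.1 (ω.1 i.1, i.2) = _
          rw [h]
          rfl
        case isFalse => rfl
      rw [hnum, d.ag_ratio ω hω z (fun w s => d.Yobs ω w s)]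
      simp only [Design.Yht]
    · refine Finset.sum_congr rfl fun j _ => ?_
      congr 1
      have hnum : (∑ i : d.AgIdx, if (ω.1 i.1, i.2) = z then
              (1:ℝ) * d.vw x ω i.1 (ω.1 i.1, i.2) j else 0)
          = ∑ i : d.AgIdx, if (ω.1 i.1, i.2) = z then
              d.alpha i.1 * ((d.Mb i.1 z.2 : ℝ)⁻¹ *
                ∑ s, if d.Z ω i.1 s = z then x i.1 s j else 0) else 0 := by
        refine Finset.sum_congr rfl fun i _ => ?_
        split
        case isTrue h =>
          rw [one_mul]
          show d.vw x ω i.1 (ω.1 i.1, i.2) j = _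
          rw [h]
          rfl
        case isFalse => rfl
      rw [hnum, d.ag_ratio ω hω z (fun w s => x w s j)]
      simp only [Design.xht]


end SplitPlotPaper
end
end

section
/- Under the uniform design condition, for every realization of the 2^2 split-plot assignment: β_ols = β_wls = β_ag = Ŷ (the common value of Ŷ_sm, Ŷ_ht, Ŷ_haj), and Ṽ_† = diag(((W_0−1)/W_0)·I_2, ((W_1−1)/W_1)·I_2)·V̂ for each † ∈ {ols, wls, ag}, where V̂ is the common value of V̂_ht and V̂_haj (rows/columns ordered (0,0),(0,1),(1,0),(1,1)); moreover, the unweighted and inverse-probability-weighted fits of the fully-interacted covariate-adjusted unit regression produce identical coefficients: β_ols,L = β_wls,L and γ_ols,z = γ_wls,z for all z∈T. -/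
open Finset Matrix Filter
open scoped Classical BigOperators

noncomputable section

namespace SplitPlotPaper

/-! ### Auxiliary machinery for the proof -/

section GenHelpers

variable {κ : Type*} [Fintype κ] [DecidableEq κ]

lemma aux_inv_diagonal (v : κ → ℝ) (hv : ∀ k, v k ≠ 0) :
    (Matrix.diagonal v)⁻¹ = Matrix.diagonal fun k => (v k)⁻¹ := by
  apply Matrix.inv_eq_right_inv
  rw [Matrix.diagonal_mul_diagonal]
  have : (fun k => v k * (v k)⁻¹) = fun _ => (1 : ℝ) :=
    funext fun k => mul_inv_cancel₀ (hv k)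
  rw [show (fun i => v i * (v i)⁻¹) = fun _ => (1:ℝ) from this, Matrix.diagonal_one]

lemma aux_diag_sandwich (u v : κ → ℝ) (A : Matrix κ κ ℝ) (k k' : κ) :
    (Matrix.diagonal u * A * Matrix.diagonal v) k k' = u k * A k k' * v k' := by
  rw [Matrix.mul_diagonal, Matrix.diagonal_mul]

/-- If the weights are constant on the "support group" of each column, weighted and
unweighted least squares coefficients coincide. -/
lemma aux_lsCoef_group_weights {ι : Type*} [Fintype ι]
    (X : Matrix ι κ ℝ) (y : ι → ℝ) (π : ι → ℝ) (c : κ → ℝ)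
    (hc : ∀ k, c k ≠ 0)
    (hX : ∀ i k, X i k ≠ 0 → π i = c k) :
    lsCoef X π y = lsCoef X (fun _ => 1) y := by
  have hptw : ∀ (i : ι) (k : κ), π i * X i k = c k * X i k := by
    intro i k
    by_cases h : X i k = 0
    · rw [h, mul_zero, mul_zero]
    · rw [hX i k h]
  have hgram : gram X π = Matrix.diagonal c * gram X (fun _ => 1) := by
    ext k k'
    rw [Matrix.diagonal_mul]
    simp only [gram, Matrix.of_apply, Finset.mul_sum]
    refine Finset.sum_congr rfl fun i _ => ?_
    rw [hptw i k]; ring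
  have hmom : (fun k => ∑ i, π i * X i k * y i)
      = (Matrix.diagonal c).mulVec (fun k => ∑ i, 1 * X i k * y i) := by
    funext k
    rw [Matrix.mulVec_diagonal, Finset.mul_sum]
    refine Finset.sum_congr rfl fun i _ => ?_
    rw [hptw i k]; ring
  have hdetc : IsUnit (Matrix.diagonal c).det := by
    rw [Matrix.det_diagonal]
    exact (Finset.prod_ne_zero_iff.2 fun k _ => hc k).isUnit
  unfold lsCoef
  rw [hgram, hmom, Matrix.mul_inv_rev, Matrix.mulVec_mulVec,
    Matrix.mul_assoc, Matrix.nonsing_inv_mul _ hdetc, Matrix.mul_one]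

end GenHelpers

section UnifHelpers

/-- `nb b`: the common number of units at B-level `b` in each whole-plot. -/
def nb (Mc0 Mc1 : ℕ) (b : Bool) : ℕ := if b then Mc1 else Mc0

/-- `nz z`: the number of units receiving treatment `z`. -/
def nz (d : Design) (Mc0 Mc1 : ℕ) (z : T) : ℝ := (d.Wa z.1 : ℝ) * (nb Mc0 Mc1 z.2 : ℝ)

/-- Whole-plot treatment-group total of observed outcomes. -/
def Sz (d : Design) (ω : d.Assign) (w : Fin d.W) (z : T) : ℝ :=
  ∑ s, if d.Z ω w s = z then d.Yobs ω w s else 0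

/-- Treatment-group total of observed outcomes. -/
def Tz (d : Design) (ω : d.Assign) (z : T) : ℝ := ∑ w, Sz d ω w z

/-- Deviation of the whole-plot mean from the HT estimator. -/
def Eh (d : Design) (ω : d.Assign) (w : Fin d.W) (z : T) : ℝ := d.Yw ω w z - d.Yht ω z

/-- The common quadratic form appearing in all covariance estimators. -/
def Qm (d : Design) (ω : d.Assign) (z z' : T) : ℝ :=
  ∑ w, if ω.1 w = z.1 then Eh d ω w z * Eh d ω w z' else 0

variable {d : Design} {Mc0 Mc1 : ℕ} {ω : d.Assign}

lemma aux_sum_Idx (f : d.Idx → ℝ) : ∑ i : d.Idx, f i = ∑ w, ∑ s, f ⟨w, s⟩ :=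
  Finset.sum_sigma Finset.univ (fun _ => Finset.univ) f

lemma aux_Z_eq_iff (w : Fin d.W) (s : Fin (d.M w)) (z : T) :
    d.Z ω w s = z ↔ ω.1 w = z.1 ∧ ω.2 w s = z.2 := by
  simp [Design.Z, Prod.ext_iff]

lemma aux_sum_Z_ite (w : Fin d.W) (z : T) (f : Fin (d.M w) → ℝ) :
    (∑ s, if d.Z ω w s = z then f s else 0)
      = if ω.1 w = z.1 then ∑ s, (if ω.2 w s = z.2 then f s else 0) else 0 := by
  by_cases h : ω.1 w = z.1
  · simp only [h, if_true]
    refine Finset.sum_congr rfl fun s _ => ?_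
    have : (d.Z ω w s = z) ↔ (ω.2 w s = z.2) := by
      rw [aux_Z_eq_iff]; simp [h]
    simp [this]
  · simp only [h, if_false]
    refine Finset.sum_eq_zero fun s _ => ?_
    have : ¬ (d.Z ω w s = z) := by rw [aux_Z_eq_iff]; tauto
    simp [this]

section WithHyp

set_option linter.unusedSectionVars false

lemma aux_Wpos : 0 < d.W := by
  have := d.hW0; have := d.hW1
  show 0 < d.W0 + d.W1
  omega

lemma aux_Wa_ge (a : Bool) : 2 ≤ d.Wa a := by
  cases a
  · exact d.hW0
  · exact d.hW1

lemma aux_Wa_ne (a : Bool) : (d.Wa a : ℝ) ≠ 0 := by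
  have := aux_Wa_ge (d := d) a; positivity

lemma aux_Wa_sub_ne (a : Bool) : (d.Wa a : ℝ) - 1 ≠ 0 := by
  have h := aux_Wa_ge (d := d) a
  have : (2 : ℝ) ≤ (d.Wa a : ℝ) := by exact_mod_cast h
  linarith

variable (h0 : ∀ w, d.M0 w = Mc0) (h1 : ∀ w, d.M1 w = Mc1) (hω : ω ∈ d.Ω)

include h0 h1 hω

lemma aux_Mc0_ge : 2 ≤ Mc0 := by
  have hw : 0 < d.W := aux_Wpos (d := d)
  have := d.hM0 ⟨0, hw⟩; rw [h0] at this; exact this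

lemma aux_Mc1_ge : 2 ≤ Mc1 := by
  have hw : 0 < d.W := aux_Wpos (d := d)
  have := d.hM1 ⟨0, hw⟩; rw [h1] at this; exact this

lemma aux_nb_ge (b : Bool) : 2 ≤ nb Mc0 Mc1 b := by
  cases b
  · exact aux_Mc0_ge h0 h1 hω
  · exact aux_Mc1_ge h0 h1 hω

lemma aux_nb_ne (b : Bool) : (nb Mc0 Mc1 b : ℝ) ≠ 0 := by
  have := aux_nb_ge h0 h1 hω b
  positivity

lemma aux_nz_ne (z : T) : nz d Mc0 Mc1 z ≠ 0 :=
  mul_ne_zero (aux_Wa_ne z.1) (aux_nb_ne h0 h1 hω z.2)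

lemma aux_M_eq (w : Fin d.W) : d.M w = Mc0 + Mc1 := by
  show d.M0 w + d.M1 w = Mc0 + Mc1
  rw [h0, h1]

lemma aux_N_eq : d.N = d.W * (Mc0 + Mc1) := by
  unfold Design.N
  rw [Finset.sum_congr rfl fun w _ => aux_M_eq h0 h1 hω w, Finset.sum_const,
    smul_eq_mul, Finset.card_univ, Fintype.card_fin, mul_comm]

lemma aux_N_ne : (d.N : ℝ) ≠ 0 := by
  have h := aux_N_eq (d := d) h0 h1 hω
  have hw := aux_Wpos (d := d)
  have h2 := aux_Mc0_ge (d := d) h0 h1 hω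
  have : 0 < d.N := by rw [h]; positivity
  positivity

lemma aux_alpha (w : Fin d.W) : d.alpha w = 1 := by
  unfold Design.alpha
  rw [aux_M_eq h0 h1 hω, aux_N_eq h0 h1 hω]
  have hw := aux_Wpos (d := d)
  have h2 := aux_Mc0_ge (d := d) h0 h1 hω
  push_cast
  have hW0R : (2:ℝ) ≤ (d.W0 : ℝ) := by exact_mod_cast d.hW0
  have hW1R : (0:ℝ) ≤ (d.W1 : ℝ) := Nat.cast_nonneg _
  have hM0R : (0:ℝ) < (Mc0 : ℝ) := by exact_mod_cast Nat.lt_of_lt_of_le Nat.zero_lt_two h2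
  have hM1R : (0:ℝ) ≤ (Mc1 : ℝ) := Nat.cast_nonneg _
  exact div_self (ne_of_gt (mul_pos (by linarith) (by linarith)))

lemma aux_Mb_eq (w : Fin d.W) (b : Bool) : d.Mb w b = nb Mc0 Mc1 b := by
  cases b
  · exact h0 w
  · exact h1 w

lemma aux_prob (w : Fin d.W) (z : T) :
    d.prob w z = nz d Mc0 Mc1 z / (d.N : ℝ) := by
  unfold Design.prob Design.p Design.q
  rw [aux_Mb_eq h0 h1 hω, aux_M_eq h0 h1 hω, aux_N_eq h0 h1 hω]
  unfold nz
  have hw : 0 < d.W := aux_Wpos (d := d)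
  have h2 := aux_Mc0_ge (d := d) h0 h1 hω
  have hWne : ((d.W : ℕ) : ℝ) ≠ 0 := by positivity
  have hMne : (((Mc0 : ℕ) : ℝ) + ((Mc1 : ℕ) : ℝ)) ≠ 0 := by positivity
  have hWR : (0:ℝ) < (d.W : ℝ) := by exact_mod_cast hw
  have hM0R : (0:ℝ) < (Mc0 : ℝ) := by exact_mod_cast Nat.lt_of_lt_of_le Nat.zero_lt_two h2
  have hM1R : (0:ℝ) ≤ (Mc1 : ℝ) := Nat.cast_nonneg _
  have hMR : (0:ℝ) < (Mc0 : ℝ) + (Mc1 : ℝ) := by linarith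
  push_cast
  rw [div_mul_div_comm]

lemma aux_prob_inv (w : Fin d.W) (z : T) :
    (d.prob w z)⁻¹ = (d.N : ℝ) / nz d Mc0 Mc1 z := by
  rw [aux_prob h0 h1 hω, inv_div]

lemma aux_card_A (a : Bool) :
    (Finset.univ.filter fun w => ω.1 w = a).card = d.Wa a := by
  have hmem := hω
  simp only [Design.Ω, Finset.mem_filter, Finset.mem_univ, true_and] at hmem
  obtain ⟨hA, -⟩ := hmem
  cases a
  · have hsplit := Finset.card_filter_add_card_filter_not
      (s := (Finset.univ : Finset (Fin d.W))) (p := fun w => ω.1 w = true)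
    have hcongr : (Finset.univ.filter fun w => ¬ (ω.1 w = true))
        = (Finset.univ.filter fun w => ω.1 w = false) := by
      apply Finset.filter_congr; intro w _; simp
    rw [hcongr, hA] at hsplit
    have hcard : (Finset.univ : Finset (Fin d.W)).card = d.W := by simp
    rw [hcard] at hsplit
    have hWdef : d.W = d.W0 + d.W1 := rfl
    show _ = d.W0
    omega
  · exact hA

lemma aux_card_B (w : Fin d.W) (b : Bool) :
    (Finset.univ.filter fun s => ω.2 w s = b).card = nb Mc0 Mc1 b := by
  have hmem := hω
  simp only [Design.Ω, Finset.mem_filter, Finset.mem_univ, true_and] at hmem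
  obtain ⟨-, hB⟩ := hmem
  have hBw := hB w
  rw [h1 w] at hBw
  cases b
  · have hsplit := Finset.card_filter_add_card_filter_not
      (s := (Finset.univ : Finset (Fin (d.M w)))) (p := fun s => ω.2 w s = true)
    have hcongr : (Finset.univ.filter fun s => ¬ (ω.2 w s = true))
        = (Finset.univ.filter fun s => ω.2 w s = false) := by
      apply Finset.filter_congr; intro s _; simp
    rw [hcongr, hBw] at hsplit
    have hcard : (Finset.univ : Finset (Fin (d.M w))).card = Mc0 + Mc1 := by
      simp [aux_M_eq h0 h1 hω w]
    rw [hcard] at hsplit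
    show _ = Mc0
    omega
  · exact hBw

lemma aux_sum_B_one (w : Fin d.W) (b : Bool) :
    (∑ s, if ω.2 w s = b then (1:ℝ) else 0) = (nb Mc0 Mc1 b : ℝ) := by
  rw [Finset.sum_boole, aux_card_B h0 h1 hω]

lemma aux_sum_Z_one (w : Fin d.W) (z : T) :
    (∑ s, if d.Z ω w s = z then (1:ℝ) else 0)
      = if ω.1 w = z.1 then (nb Mc0 Mc1 z.2 : ℝ) else 0 := by
  rw [aux_sum_Z_ite]
  by_cases h : ω.1 w = z.1 <;> simp [h, aux_sum_B_one h0 h1 hω]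

lemma aux_sum_A_const (a : Bool) (c : ℝ) :
    (∑ w, if ω.1 w = a then c else 0) = (d.Wa a : ℝ) * c := by
  rw [Finset.sum_ite, Finset.sum_const, Finset.sum_const_zero, add_zero,
    aux_card_A h0 h1 hω, nsmul_eq_mul]

lemma aux_total_count (z : T) :
    (∑ w, ∑ s, if d.Z ω w s = z then (1:ℝ) else 0) = nz d Mc0 Mc1 z := by
  rw [Finset.sum_congr rfl fun w _ => aux_sum_Z_one h0 h1 hω w z,
    aux_sum_A_const h0 h1 hω]
  rfl

lemma aux_Sz_zero {w : Fin d.W} {z : T} (h : ¬ ω.1 w = z.1) : Sz d ω w z = 0 := by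
  unfold Sz; rw [aux_sum_Z_ite]; simp [h]

lemma aux_Yw (w : Fin d.W) (z : T) :
    d.Yw ω w z = (nb Mc0 Mc1 z.2 : ℝ)⁻¹ * Sz d ω w z := by
  unfold Design.Yw Sz
  rw [aux_Mb_eq h0 h1 hω]

lemma aux_Yw_zero {w : Fin d.W} {z : T} (h : ¬ ω.1 w = z.1) : d.Yw ω w z = 0 := by
  rw [aux_Yw h0 h1 hω, aux_Sz_zero h0 h1 hω h, mul_zero]

lemma aux_Yht (z : T) : d.Yht ω z = (nz d Mc0 Mc1 z)⁻¹ * Tz d ω z := by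
  unfold Design.Yht
  have hsummand : ∀ (w : Fin d.W) (s : Fin (d.M w)),
      (if d.Z ω w s = z then (d.prob w z)⁻¹ * d.Yobs ω w s else 0)
        = ((d.N : ℝ) / nz d Mc0 Mc1 z) * (if d.Z ω w s = z then d.Yobs ω w s else 0) := by
    intro w s
    by_cases h : d.Z ω w s = z
    · rw [if_pos h, if_pos h, aux_prob_inv h0 h1 hω]
    · rw [if_neg h, if_neg h, mul_zero]
  have key : (∑ w, ∑ s, if d.Z ω w s = z then (d.prob w z)⁻¹ * d.Yobs ω w s else 0)
      = ((d.N : ℝ) / nz d Mc0 Mc1 z) * Tz d ω z := by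
    simp only [hsummand]
    simp_rw [← Finset.mul_sum]
    rfl
  rw [key]
  have hN := aux_N_ne (d := d) h0 h1 hω
  have hz := aux_nz_ne (d := d) h0 h1 hω z
  field_simp

lemma aux_oneHt (z : T) : d.oneHt ω z = 1 := by
  unfold Design.oneHt
  have hsummand : ∀ (w : Fin d.W) (s : Fin (d.M w)),
      (if d.Z ω w s = z then (d.prob w z)⁻¹ else 0)
        = ((d.N : ℝ) / nz d Mc0 Mc1 z) * (if d.Z ω w s = z then (1:ℝ) else 0) := by
    intro w s
    by_cases h : d.Z ω w s = z
    · rw [if_pos h, if_pos h, aux_prob_inv h0 h1 hω, mul_one]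
    · rw [if_neg h, if_neg h, mul_zero]
  have key : (∑ w, ∑ s, if d.Z ω w s = z then (d.prob w z)⁻¹ else 0)
      = ((d.N : ℝ) / nz d Mc0 Mc1 z) * nz d Mc0 Mc1 z := by
    simp only [hsummand]
    simp_rw [← Finset.mul_sum]
    rw [aux_total_count h0 h1 hω z]
  rw [key]
  have hN := aux_N_ne (d := d) h0 h1 hω
  have hz := aux_nz_ne (d := d) h0 h1 hω z
  field_simp

lemma aux_Yhaj (z : T) : d.Yhaj ω z = d.Yht ω z := by
  unfold Design.Yhaj
  rw [aux_oneHt h0 h1 hω, div_one]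

lemma aux_Ysm (z : T) : d.Ysm ω z = d.Yht ω z := by
  unfold Design.Ysm
  rw [aux_total_count h0 h1 hω z, aux_Yht h0 h1 hω z, div_eq_inv_mul]
  rfl

end WithHyp

/-- Coefficient formula when the Gram matrix is diagonal. -/
lemma aux_lsCoef_diag {ι κ : Type*} [Fintype ι] [Fintype κ] [DecidableEq κ]
    (X : Matrix ι κ ℝ) (π y : ι → ℝ) (v : κ → ℝ) (hv : ∀ k, v k ≠ 0)
    (hg : gram X π = Matrix.diagonal v) (k : κ) :
    lsCoef X π y k = (v k)⁻¹ * ∑ i, π i * X i k * y i := by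
  unfold lsCoef
  rw [hg, aux_inv_diagonal v hv, Matrix.mulVec_diagonal]

lemma aux_clusterCov_entry {ι κ γ : Type*} [Fintype ι] [Fintype κ] [DecidableEq κ]
    [Fintype γ] [DecidableEq γ]
    (X : Matrix ι κ ℝ) (π y : ι → ℝ) (cl : ι → γ) (v : κ → ℝ) (hv : ∀ k, v k ≠ 0)
    (hg : gram X π = Matrix.diagonal v) (k k' : κ) :
    clusterCov X π y cl k k'
      = (v k)⁻¹ *
        (∑ g : γ, (∑ i, if cl i = g then π i * X i k * lsResid X π y i else 0) *
          (∑ i, if cl i = g then π i * X i k' * lsResid X π y i else 0)) *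
        (v k')⁻¹ := by
  unfold clusterCov
  rw [hg, aux_inv_diagonal v hv, aux_diag_sandwich]
  rfl

lemma aux_sum_AgIdx (f : d.AgIdx → ℝ) : ∑ i : d.AgIdx, f i = ∑ w, ∑ b, f (w, b) := by
  rw [← Finset.univ_product_univ, Finset.sum_product]

lemma aux_pair_sum (w : Fin d.W) (z : T) (F : Bool → ℝ) :
    (∑ b, if (ω.1 w, b) = z then F b else 0) = if ω.1 w = z.1 then F z.2 else 0 := by
  obtain ⟨a, b'⟩ := z
  by_cases h : ω.1 w = a
  · simp only [Prod.mk.injEq, h, true_and, if_pos]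
    rw [Finset.sum_ite_eq' Finset.univ b' F]
    simp
  · simp [Prod.mk.injEq, h]

section WithHyp2

set_option linter.unusedSectionVars false

variable (h0 : ∀ w, d.M0 w = Mc0) (h1 : ∀ w, d.M1 w = Mc1) (hω : ω ∈ d.Ω)

include h0 h1 hω

/-- The Gram matrix of the unit regression is diagonal, for any weights. -/
lemma aux_gram_unit (π : d.Idx → ℝ) :
    gram (d.Dunit ω) π
      = Matrix.diagonal (fun z => ∑ i : d.Idx, if d.Z ω i.1 i.2 = z then π i else 0) := by
  ext z z'
  simp only [gram, Matrix.of_apply, Design.Dunit]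
  rcases eq_or_ne z z' with rfl | h
  · rw [Matrix.diagonal_apply_eq]
    refine Finset.sum_congr rfl fun i _ => ?_
    by_cases hz : d.Z ω i.1 i.2 = z <;> simp [hz]
  · rw [Matrix.diagonal_apply_ne _ h]
    refine Finset.sum_eq_zero fun i _ => ?_
    by_cases hz : d.Z ω i.1 i.2 = z
    · simp [hz, h]
    · simp [hz]

lemma aux_gram_unit_one :
    gram (d.Dunit ω) (fun _ => 1) = Matrix.diagonal (nz d Mc0 Mc1) := by
  rw [aux_gram_unit h0 h1 hω]
  refine congrArg Matrix.diagonal (funext fun z => ?_)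
  rw [aux_sum_Idx]
  exact aux_total_count h0 h1 hω z

lemma aux_wgt_eq (w : Fin d.W) (s : Fin (d.M w)) :
    d.wgt ω ⟨w, s⟩ = (d.N : ℝ) / nz d Mc0 Mc1 (d.Z ω w s) := by
  unfold Design.wgt
  exact aux_prob_inv h0 h1 hω w _

lemma aux_gram_unit_wgt :
    gram (d.Dunit ω) (d.wgt ω) = Matrix.diagonal (fun _ => (d.N : ℝ)) := by
  rw [aux_gram_unit h0 h1 hω]
  refine congrArg Matrix.diagonal (funext fun z => ?_)
  rw [aux_sum_Idx]
  have hs : ∀ (w : Fin d.W) (s : Fin (d.M w)),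
      (if d.Z ω w s = z then d.wgt ω ⟨w, s⟩ else 0)
        = ((d.N : ℝ) / nz d Mc0 Mc1 z) * (if d.Z ω w s = z then (1:ℝ) else 0) := by
    intro w s
    by_cases h : d.Z ω w s = z
    · rw [if_pos h, if_pos h, mul_one, aux_wgt_eq h0 h1 hω, h]
    · rw [if_neg h, if_neg h, mul_zero]
  simp only [hs]
  simp_rw [← Finset.mul_sum]
  rw [aux_total_count h0 h1 hω z]
  have hN := aux_N_ne (d := d) h0 h1 hω
  have hz := aux_nz_ne (d := d) h0 h1 hω z
  field_simp

lemma aux_mom_unit_one (z : T) :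
    (∑ i : d.Idx, (1:ℝ) * d.Dunit ω i z * d.Yv ω i) = Tz d ω z := by
  rw [aux_sum_Idx]
  refine Finset.sum_congr rfl fun w _ => Finset.sum_congr rfl fun s _ => ?_
  simp only [Design.Dunit, Matrix.of_apply, Design.Yv, one_mul]
  by_cases h : d.Z ω w s = z <;> simp [h]

lemma aux_mom_unit_wgt (z : T) :
    (∑ i : d.Idx, d.wgt ω i * d.Dunit ω i z * d.Yv ω i)
      = ((d.N : ℝ) / nz d Mc0 Mc1 z) * Tz d ω z := by
  rw [aux_sum_Idx]
  have hs : ∀ (w : Fin d.W) (s : Fin (d.M w)),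
      d.wgt ω ⟨w, s⟩ * d.Dunit ω ⟨w, s⟩ z * d.Yv ω ⟨w, s⟩
        = ((d.N : ℝ) / nz d Mc0 Mc1 z) * (if d.Z ω w s = z then d.Yobs ω w s else 0) := by
    intro w s
    simp only [Design.Dunit, Matrix.of_apply, Design.Yv]
    by_cases h : d.Z ω w s = z
    · rw [if_pos h, if_pos h, aux_wgt_eq h0 h1 hω, h]; ring
    · rw [if_neg h, if_neg h, mul_zero, mul_zero, zero_mul]
  simp only [hs]
  simp_rw [← Finset.mul_sum]
  rfl

lemma aux_betaOls (z : T) : d.betaOls ω z = d.Yht ω z := by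
  unfold Design.betaOls
  rw [aux_lsCoef_diag (d.Dunit ω) (fun _ => 1) (d.Yv ω) (nz d Mc0 Mc1)
      (aux_nz_ne h0 h1 hω) (aux_gram_unit_one h0 h1 hω) z,
    aux_mom_unit_one h0 h1 hω z, aux_Yht h0 h1 hω z]

lemma aux_betaWls (z : T) : d.betaWls ω z = d.Yht ω z := by
  unfold Design.betaWls
  rw [aux_lsCoef_diag (d.Dunit ω) (d.wgt ω) (d.Yv ω) (fun _ => (d.N : ℝ))
      (fun _ => aux_N_ne h0 h1 hω) (aux_gram_unit_wgt h0 h1 hω) z,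
    aux_mom_unit_wgt h0 h1 hω z, aux_Yht h0 h1 hω z]
  have hN := aux_N_ne (d := d) h0 h1 hω
  have hz := aux_nz_ne (d := d) h0 h1 hω z
  field_simp

lemma aux_gram_ag :
    gram (d.Dag ω) (fun _ => 1) = Matrix.diagonal (fun z : T => (d.Wa z.1 : ℝ)) := by
  ext z z'
  simp only [gram, Matrix.of_apply, Design.Dag, one_mul]
  rcases eq_or_ne z z' with rfl | h
  · rw [Matrix.diagonal_apply_eq]
    have : ∀ i : d.AgIdx,
        ((if (ω.1 i.1, i.2) = z then (1:ℝ) else 0) * (if (ω.1 i.1, i.2) = z then (1:ℝ) else 0))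
          = (if (ω.1 i.1, i.2) = z then (1:ℝ) else 0) := by
      intro i; by_cases hz : (ω.1 i.1, i.2) = z <;> simp [hz]
    rw [Finset.sum_congr rfl fun i _ => this i, aux_sum_AgIdx]
    rw [Finset.sum_congr rfl fun w _ => aux_pair_sum w z (fun _ => (1:ℝ)),
      aux_sum_A_const h0 h1 hω, mul_one]
  · rw [Matrix.diagonal_apply_ne _ h]
    refine Finset.sum_eq_zero fun i _ => ?_
    by_cases hz : (ω.1 i.1, i.2) = z
    · simp [hz, h]
    · simp [hz]

lemma aux_mom_ag (z : T) :
    (∑ i : d.AgIdx, (1:ℝ) * d.Dag ω i z * d.Uag ω i)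
      = (nb Mc0 Mc1 z.2 : ℝ)⁻¹ * Tz d ω z := by
  rw [aux_sum_AgIdx]
  have hw : ∀ w : Fin d.W,
      (∑ b, (1:ℝ) * d.Dag ω (w, b) z * d.Uag ω (w, b))
        = if ω.1 w = z.1 then d.Yw ω w z else 0 := by
    intro w
    simp only [Design.Dag, Matrix.of_apply, Design.Uag, one_mul]
    have : ∀ b : Bool, (if (ω.1 w, b) = z then (1:ℝ) else 0) * d.Uw ω w (ω.1 w, b)
        = if (ω.1 w, b) = z then d.Uw ω w (ω.1 w, b) else 0 := by
      intro b; by_cases hb : (ω.1 w, b) = z <;> simp [hb]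
    rw [Finset.sum_congr rfl fun b _ => this b, aux_pair_sum w z]
    by_cases h : ω.1 w = z.1
    · rw [if_pos h, if_pos h]
      have hz : (ω.1 w, z.2) = z := by rw [h]
      rw [hz]
      unfold Design.Uw
      rw [aux_alpha h0 h1 hω, one_mul]
    · rw [if_neg h, if_neg h]
  rw [Finset.sum_congr rfl fun w _ => hw w]
  have hterm : ∀ w : Fin d.W, (if ω.1 w = z.1 then d.Yw ω w z else 0)
      = (nb Mc0 Mc1 z.2 : ℝ)⁻¹ * Sz d ω w z := by
    intro w
    by_cases h : ω.1 w = z.1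
    · rw [if_pos h, aux_Yw h0 h1 hω]
    · rw [if_neg h, aux_Sz_zero h0 h1 hω h, mul_zero]
  rw [Finset.sum_congr rfl fun w _ => hterm w, ← Finset.mul_sum]
  rfl

lemma aux_betaAg (z : T) : d.betaAg ω z = d.Yht ω z := by
  unfold Design.betaAg
  rw [aux_lsCoef_diag (d.Dag ω) (fun _ => 1) (d.Uag ω) (fun z : T => (d.Wa z.1 : ℝ))
      (fun k => aux_Wa_ne (d := d) k.1) (aux_gram_ag h0 h1 hω) z,
    aux_mom_ag h0 h1 hω z, aux_Yht h0 h1 hω z]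
  unfold nz
  have hWa := aux_Wa_ne (d := d) z.1
  have hnb := aux_nb_ne (d := d) h0 h1 hω z.2
  rw [mul_inv]
  ring

lemma aux_resid_unit (π : d.Idx → ℝ)
    (hβ : ∀ z, lsCoef (d.Dunit ω) π (d.Yv ω) z = d.Yht ω z) (i : d.Idx) :
    lsResid (d.Dunit ω) π (d.Yv ω) i
      = d.Yobs ω i.1 i.2 - d.Yht ω (d.Z ω i.1 i.2) := by
  unfold lsResid
  have hsum : ∀ k : T, d.Dunit ω i k * lsCoef (d.Dunit ω) π (d.Yv ω) k
      = if d.Z ω i.1 i.2 = k then d.Yht ω k else 0 := by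
    intro k
    by_cases hk : d.Z ω i.1 i.2 = k
    · have hD : d.Dunit ω i k = 1 := by simp [Design.Dunit, hk]
      rw [hD, one_mul, hβ, if_pos hk]
    · have hD : d.Dunit ω i k = 0 := by simp [Design.Dunit, hk]
      rw [hD, zero_mul, if_neg hk]
  rw [Finset.sum_congr rfl fun k _ => hsum k, Finset.sum_ite_eq]
  simp only [Finset.mem_univ, if_true]
  rfl

lemma aux_cs_unit (π : d.Idx → ℝ) (c : T → ℝ)
    (hπ : ∀ i : d.Idx, π i = c (d.Z ω i.1 i.2))
    (hβ : ∀ z, lsCoef (d.Dunit ω) π (d.Yv ω) z = d.Yht ω z)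
    (w : Fin d.W) (z : T) :
    (∑ i : d.Idx, if d.clUnit i = w
        then π i * d.Dunit ω i z * lsResid (d.Dunit ω) π (d.Yv ω) i else 0)
      = if ω.1 w = z.1 then c z * (nb Mc0 Mc1 z.2 : ℝ) * Eh d ω w z else 0 := by
  rw [aux_sum_Idx]
  have hout : ∀ w' : Fin d.W,
      (∑ s : Fin (d.M w'), if d.clUnit ⟨w', s⟩ = w
          then π ⟨w', s⟩ * d.Dunit ω ⟨w', s⟩ z * lsResid (d.Dunit ω) π (d.Yv ω) ⟨w', s⟩ else 0)
        = if w' = w then (∑ s : Fin (d.M w'),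
            π ⟨w', s⟩ * d.Dunit ω ⟨w', s⟩ z * lsResid (d.Dunit ω) π (d.Yv ω) ⟨w', s⟩) else 0 := by
    intro w'
    by_cases hw : w' = w
    · rw [if_pos hw]
      exact Finset.sum_congr rfl fun s _ => if_pos (show d.clUnit ⟨w', s⟩ = w from hw)
    · rw [if_neg hw]
      exact Finset.sum_eq_zero fun s _ => if_neg (show ¬ d.clUnit ⟨w', s⟩ = w from hw)
  rw [Finset.sum_congr rfl fun w' _ => hout w', Finset.sum_ite_eq' Finset.univ w,
    if_pos (Finset.mem_univ w)]
  have hterm : ∀ s : Fin (d.M w),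
      π ⟨w, s⟩ * d.Dunit ω ⟨w, s⟩ z * lsResid (d.Dunit ω) π (d.Yv ω) ⟨w, s⟩
        = (if d.Z ω w s = z then c z * d.Yobs ω w s else 0)
          - (if d.Z ω w s = z then c z * d.Yht ω z else 0) := by
    intro s
    rw [aux_resid_unit h0 h1 hω π hβ]
    simp only [Design.Dunit, Matrix.of_apply]
    by_cases hk : d.Z ω w s = z
    · rw [hπ ⟨w, s⟩]
      simp only [hk]
      simp [mul_sub]
    · rw [if_neg hk, if_neg hk, if_neg hk, mul_zero, zero_mul, sub_zero]
  rw [Finset.sum_congr rfl fun s _ => hterm s, Finset.sum_sub_distrib]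
  have hA : (∑ s, if d.Z ω w s = z then c z * d.Yobs ω w s else 0) = c z * Sz d ω w z := by
    unfold Sz
    rw [Finset.mul_sum]
    refine Finset.sum_congr rfl fun s _ => ?_
    by_cases hk : d.Z ω w s = z <;> simp [hk]
  have hB : (∑ s, if d.Z ω w s = z then c z * d.Yht ω z else 0)
      = c z * d.Yht ω z * (if ω.1 w = z.1 then (nb Mc0 Mc1 z.2 : ℝ) else 0) := by
    rw [← aux_sum_Z_one h0 h1 hω w z, Finset.mul_sum]
    refine Finset.sum_congr rfl fun s _ => ?_
    by_cases hk : d.Z ω w s = z <;> simp [hk]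
  rw [hA, hB]
  by_cases h : ω.1 w = z.1
  · rw [if_pos h, if_pos h]
    unfold Eh
    rw [aux_Yw h0 h1 hω]
    have hnb := aux_nb_ne h0 h1 hω z.2
    field_simp
  · rw [if_neg h, if_neg h, aux_Sz_zero h0 h1 hω h]
    ring

lemma aux_V_unit (π : d.Idx → ℝ) (c : T → ℝ)
    (hπ : ∀ i : d.Idx, π i = c (d.Z ω i.1 i.2))
    (hβ : ∀ z, lsCoef (d.Dunit ω) π (d.Yv ω) z = d.Yht ω z)
    (v : T → ℝ) (hv : ∀ k, v k ≠ 0)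
    (hg : gram (d.Dunit ω) π = Matrix.diagonal v)
    (hvc : ∀ z : T, (v z)⁻¹ * (c z * (nb Mc0 Mc1 z.2 : ℝ)) = (d.Wa z.1 : ℝ)⁻¹)
    (z z' : T) :
    clusterCov (d.Dunit ω) π (d.Yv ω) d.clUnit z z'
      = if z.1 = z'.1 then (d.Wa z.1 : ℝ)⁻¹ * (d.Wa z'.1 : ℝ)⁻¹ * Qm d ω z z' else 0 := by
  rw [aux_clusterCov_entry (d.Dunit ω) π (d.Yv ω) d.clUnit v hv hg z z']
  rw [Finset.sum_congr rfl fun g _ => by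
    rw [aux_cs_unit h0 h1 hω π c hπ hβ g z, aux_cs_unit h0 h1 hω π c hπ hβ g z']]
  by_cases h : z.1 = z'.1
  · rw [if_pos h]
    have hmeat : (∑ g : Fin d.W,
        (if ω.1 g = z.1 then c z * (nb Mc0 Mc1 z.2 : ℝ) * Eh d ω g z else 0) *
          (if ω.1 g = z'.1 then c z' * (nb Mc0 Mc1 z'.2 : ℝ) * Eh d ω g z' else 0))
        = (c z * (nb Mc0 Mc1 z.2 : ℝ)) * (c z' * (nb Mc0 Mc1 z'.2 : ℝ)) * Qm d ω z z' := by
      unfold Qm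
      rw [Finset.mul_sum]
      refine Finset.sum_congr rfl fun g _ => ?_
      by_cases hg' : ω.1 g = z.1
      · rw [if_pos hg', if_pos (h ▸ hg'), if_pos hg']
        ring
      · rw [if_neg hg', if_neg (fun hh => hg' (h.symm ▸ hh)), if_neg hg', zero_mul, mul_zero]
    rw [hmeat]
    have h1' := hvc z
    have h2' := hvc z'
    calc (v z)⁻¹ * ((c z * (nb Mc0 Mc1 z.2 : ℝ)) * (c z' * (nb Mc0 Mc1 z'.2 : ℝ)) * Qm d ω z z') * (v z')⁻¹
        = ((v z)⁻¹ * (c z * (nb Mc0 Mc1 z.2 : ℝ))) * ((v z')⁻¹ * (c z' * (nb Mc0 Mc1 z'.2 : ℝ))) * Qm d ω z z' := by ring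
      _ = (d.Wa z.1 : ℝ)⁻¹ * (d.Wa z'.1 : ℝ)⁻¹ * Qm d ω z z' := by rw [h1', h2']
  · rw [if_neg h]
    have hmeat : (∑ g : Fin d.W,
        (if ω.1 g = z.1 then c z * (nb Mc0 Mc1 z.2 : ℝ) * Eh d ω g z else 0) *
          (if ω.1 g = z'.1 then c z' * (nb Mc0 Mc1 z'.2 : ℝ) * Eh d ω g z' else 0)) = 0 := by
      refine Finset.sum_eq_zero fun g _ => ?_
      by_cases hg' : ω.1 g = z.1
      · rw [if_neg (fun hh : ω.1 g = z'.1 => h (hg' ▸ hh)), mul_zero]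
      · rw [if_neg hg', zero_mul]
    rw [hmeat, mul_zero, zero_mul]

lemma aux_resid_ag
    (hβ : ∀ z, lsCoef (d.Dag ω) (fun _ => 1) (d.Uag ω) z = d.Yht ω z) (i : d.AgIdx) :
    lsResid (d.Dag ω) (fun _ => 1) (d.Uag ω) i
      = d.Yw ω i.1 (ω.1 i.1, i.2) - d.Yht ω (ω.1 i.1, i.2) := by
  unfold lsResid
  have hsum : ∀ k : T, d.Dag ω i k * lsCoef (d.Dag ω) (fun _ => 1) (d.Uag ω) k
      = if (ω.1 i.1, i.2) = k then d.Yht ω k else 0 := by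
    intro k
    by_cases hk : (ω.1 i.1, i.2) = k
    · have hD : d.Dag ω i k = 1 := by simp [Design.Dag, hk]
      rw [hD, one_mul, hβ, if_pos hk]
    · have hD : d.Dag ω i k = 0 := by simp [Design.Dag, hk]
      rw [hD, zero_mul, if_neg hk]
  rw [Finset.sum_congr rfl fun k _ => hsum k, Finset.sum_ite_eq]
  simp only [Finset.mem_univ, if_true]
  unfold Design.Uag Design.Uw
  rw [aux_alpha h0 h1 hω, one_mul]

lemma aux_cs_ag
    (hβ : ∀ z, lsCoef (d.Dag ω) (fun _ => 1) (d.Uag ω) z = d.Yht ω z)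
    (w : Fin d.W) (z : T) :
    (∑ i : d.AgIdx, if d.clAg i = w
        then 1 * d.Dag ω i z * lsResid (d.Dag ω) (fun _ => 1) (d.Uag ω) i else 0)
      = if ω.1 w = z.1 then Eh d ω w z else 0 := by
  rw [aux_sum_AgIdx]
  have hout : ∀ w' : Fin d.W,
      (∑ b, if d.clAg (w', b) = w
          then 1 * d.Dag ω (w', b) z * lsResid (d.Dag ω) (fun _ => 1) (d.Uag ω) (w', b) else 0)
        = if w' = w then (∑ b,
            1 * d.Dag ω (w', b) z * lsResid (d.Dag ω) (fun _ => 1) (d.Uag ω) (w', b)) else 0 := by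
    intro w'
    by_cases hw : w' = w
    · rw [if_pos hw]
      exact Finset.sum_congr rfl fun b _ => if_pos (show d.clAg (w', b) = w from hw)
    · rw [if_neg hw]
      exact Finset.sum_eq_zero fun b _ => if_neg (show ¬ d.clAg (w', b) = w from hw)
  rw [Finset.sum_congr rfl fun w' _ => hout w', Finset.sum_ite_eq' Finset.univ w,
    if_pos (Finset.mem_univ w)]
  have hterm : ∀ b : Bool,
      1 * d.Dag ω (w, b) z * lsResid (d.Dag ω) (fun _ => 1) (d.Uag ω) (w, b)
        = if (ω.1 w, b) = z then (d.Yw ω w (ω.1 w, b) - d.Yht ω (ω.1 w, b)) else 0 := by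
    intro b
    rw [aux_resid_ag h0 h1 hω hβ (w, b)]
    simp only [Design.Dag, Matrix.of_apply, one_mul]
    by_cases hb : (ω.1 w, b) = z
    · rw [if_pos hb, if_pos hb, one_mul]
    · rw [if_neg hb, if_neg hb, zero_mul]
  rw [Finset.sum_congr rfl fun b _ => hterm b, aux_pair_sum w z]
  by_cases h : ω.1 w = z.1
  · rw [if_pos h, if_pos h]
    have hz : (ω.1 w, z.2) = z := by rw [h]
    rw [hz]
    rfl
  · rw [if_neg h, if_neg h]

lemma aux_V_ag
    (hβ : ∀ z, lsCoef (d.Dag ω) (fun _ => 1) (d.Uag ω) z = d.Yht ω z)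
    (z z' : T) :
    clusterCov (d.Dag ω) (fun _ => 1) (d.Uag ω) d.clAg z z'
      = if z.1 = z'.1 then (d.Wa z.1 : ℝ)⁻¹ * (d.Wa z'.1 : ℝ)⁻¹ * Qm d ω z z' else 0 := by
  rw [aux_clusterCov_entry (d.Dag ω) (fun _ => 1) (d.Uag ω) d.clAg
    (fun z : T => (d.Wa z.1 : ℝ)) (fun k => aux_Wa_ne (d := d) k.1) (aux_gram_ag h0 h1 hω) z z']
  rw [Finset.sum_congr rfl fun g _ => by
    rw [aux_cs_ag h0 h1 hω hβ g z, aux_cs_ag h0 h1 hω hβ g z']]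
  by_cases h : z.1 = z'.1
  · rw [if_pos h]
    have hmeat : (∑ g : Fin d.W,
        (if ω.1 g = z.1 then Eh d ω g z else 0) * (if ω.1 g = z'.1 then Eh d ω g z' else 0))
        = Qm d ω z z' := by
      unfold Qm
      refine Finset.sum_congr rfl fun g _ => ?_
      by_cases hg' : ω.1 g = z.1
      · rw [if_pos hg', if_pos (h ▸ hg'), if_pos hg']
      · rw [if_neg hg', if_neg hg', zero_mul]
    rw [hmeat]
    ring
  · rw [if_neg h]
    have hmeat : (∑ g : Fin d.W,
        (if ω.1 g = z.1 then Eh d ω g z else 0) * (if ω.1 g = z'.1 then Eh d ω g z' else 0))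
        = 0 := by
      refine Finset.sum_eq_zero fun g _ => ?_
      by_cases hg' : ω.1 g = z.1
      · rw [if_neg (fun hh : ω.1 g = z'.1 => h (hg' ▸ hh)), mul_zero]
      · rw [if_neg hg', zero_mul]
    rw [hmeat, mul_zero, zero_mul]

lemma aux_ShtHat (z z' : T) :
    d.ShtHat ω z z' = ((d.Wa z.1 : ℝ) - 1)⁻¹ * Qm d ω z z' := by
  unfold Design.ShtHat Qm Eh
  congr 1
  refine Finset.sum_congr rfl fun w _ => ?_
  by_cases h : ω.1 w = z.1
  · rw [if_pos h, if_pos h, aux_alpha h0 h1 hω, one_mul, one_mul]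
  · rw [if_neg h, if_neg h]

lemma aux_ShajHat (z z' : T) :
    d.ShajHat ω z z' = ((d.Wa z.1 : ℝ) - 1)⁻¹ * Qm d ω z z' := by
  unfold Design.ShajHat Qm Eh
  congr 1
  refine Finset.sum_congr rfl fun w _ => ?_
  by_cases h : ω.1 w = z.1
  · rw [if_pos h, if_pos h, aux_alpha h0 h1 hω, aux_Yhaj h0 h1 hω, aux_Yhaj h0 h1 hω]
    ring
  · rw [if_neg h, if_neg h]

lemma aux_Vht_entry (z z' : T) :
    d.Vht ω z z'
      = if z.1 = z'.1 then (d.Wa z.1 : ℝ)⁻¹ * (((d.Wa z.1 : ℝ) - 1)⁻¹ * Qm d ω z z') else 0 := by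
  unfold Design.Vht
  rw [Matrix.of_apply]
  by_cases h : z.1 = z'.1
  · rw [if_pos h, if_pos h, aux_ShtHat h0 h1 hω]
  · rw [if_neg h, if_neg h]

end WithHyp2

end UnifHelpers

/-- Under the uniform design condition, for every realization of the
2² split-plot assignment: `β_ols = β_wls = β_ag = Ŷ` (the common value of `Ŷ_sm`,
`Ŷ_ht`, `Ŷ_haj`); `Ṽ_† = diag(((W₀−1)/W₀)I₂, ((W₁−1)/W₁)I₂) · V̂` for every
`† ∈ {ols, wls, ag}`, where `V̂` is the common value of `V̂_ht` and `V̂_haj`; moreover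
the unweighted and inverse-probability-weighted fits of the fully-interacted
covariate-adjusted unit regression produce identical coefficients. -/
theorem uniform_design_unification (d : Design) (Mc0 Mc1 : ℕ)
    (h0 : ∀ w, d.M0 w = Mc0) (h1 : ∀ w, d.M1 w = Mc1)
    (ω : d.Assign) (hω : ω ∈ d.Ω)
    {J : ℕ} (x : (w : Fin d.W) → Fin (d.M w) → Fin J → ℝ)
    (hx : ∀ j, (∑ w, ∑ s, x w s j) = 0)
    (hols : IsUnit (gram (d.DunitL x ω) (fun _ => 1)).det)
    (hwls : IsUnit (gram (d.DunitL x ω) (d.wgt ω)).det) :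
    (∀ z : T,
      d.Ysm ω z = d.Yht ω z ∧ d.Yhaj ω z = d.Yht ω z ∧
      d.betaOls ω z = d.Yht ω z ∧ d.betaWls ω z = d.Yht ω z ∧ d.betaAg ω z = d.Yht ω z) ∧
    d.Vhaj ω = d.Vht ω ∧
    d.Vols ω
      = (Matrix.diagonal fun z : T => ((d.Wa z.1 : ℝ) - 1) / (d.Wa z.1 : ℝ)) * d.Vht ω ∧
    d.Vwls ω
      = (Matrix.diagonal fun z : T => ((d.Wa z.1 : ℝ) - 1) / (d.Wa z.1 : ℝ)) * d.Vht ω ∧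
    d.VagCR ω
      = (Matrix.diagonal fun z : T => ((d.Wa z.1 : ℝ) - 1) / (d.Wa z.1 : ℝ)) * d.Vht ω ∧
    (∀ k : T ⊕ T × Fin J,
      lsCoef (d.DunitL x ω) (fun _ => 1) (d.Yv ω) k
        = lsCoef (d.DunitL x ω) (d.wgt ω) (d.Yv ω) k) := by
  have hβols : ∀ z, lsCoef (d.Dunit ω) (fun _ => 1) (d.Yv ω) z = d.Yht ω z :=
    fun z => aux_betaOls h0 h1 hω z
  have hβwls : ∀ z, lsCoef (d.Dunit ω) (d.wgt ω) (d.Yv ω) z = d.Yht ω z :=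
    fun z => aux_betaWls h0 h1 hω z
  have hβag : ∀ z, lsCoef (d.Dag ω) (fun _ => 1) (d.Uag ω) z = d.Yht ω z :=
    fun z => aux_betaAg h0 h1 hω z
  have hvc_ols : ∀ z : T,
      (nz d Mc0 Mc1 z)⁻¹ * ((1 : ℝ) * (nb Mc0 Mc1 z.2 : ℝ)) = (d.Wa z.1 : ℝ)⁻¹ := by
    intro z
    have hnb := aux_nb_ne h0 h1 hω z.2
    unfold nz
    rw [one_mul, mul_inv, mul_assoc, inv_mul_cancel₀ hnb, mul_one]
  have hvc_wls : ∀ z : T,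
      ((d.N : ℝ))⁻¹ * (((d.N : ℝ) / nz d Mc0 Mc1 z) * (nb Mc0 Mc1 z.2 : ℝ))
        = (d.Wa z.1 : ℝ)⁻¹ := by
    intro z
    have hnb := aux_nb_ne h0 h1 hω z.2
    have hN := aux_N_ne h0 h1 hω
    have hWa := aux_Wa_ne (d := d) z.1
    unfold nz
    field_simp
  have hVent : ∀ z z' : T, d.Vht ω z z'
      = if z.1 = z'.1 then (d.Wa z.1 : ℝ)⁻¹ * (((d.Wa z.1 : ℝ) - 1)⁻¹ * Qm d ω z z') else 0 :=
    fun z z' => aux_Vht_entry h0 h1 hω z z'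
  refine ⟨fun z => ⟨aux_Ysm h0 h1 hω z, aux_Yhaj h0 h1 hω z, aux_betaOls h0 h1 hω z,
      aux_betaWls h0 h1 hω z, aux_betaAg h0 h1 hω z⟩, ?_, ?_, ?_, ?_, ?_⟩
  · -- Vhaj = Vht
    ext z z'
    unfold Design.Vhaj Design.Vht
    rw [Matrix.of_apply, Matrix.of_apply, aux_ShajHat h0 h1 hω, aux_ShtHat h0 h1 hω]
  · -- Vols
    ext z z'
    have hL : d.Vols ω z z'
        = if z.1 = z'.1 then (d.Wa z.1 : ℝ)⁻¹ * (d.Wa z'.1 : ℝ)⁻¹ * Qm d ω z z' else 0 :=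
      aux_V_unit h0 h1 hω (fun _ => 1) (fun _ => 1) (fun _ => rfl) hβols (nz d Mc0 Mc1)
        (aux_nz_ne h0 h1 hω) (aux_gram_unit_one h0 h1 hω) hvc_ols z z'
    rw [hL, Matrix.diagonal_mul, hVent z z']
    by_cases h : z.1 = z'.1
    · rw [if_pos h, if_pos h, ← h]
      have hWa := aux_Wa_ne (d := d) z.1
      have hWs := aux_Wa_sub_ne (d := d) z.1
      field_simp
    · rw [if_neg h, if_neg h, mul_zero]
  · -- Vwls
    ext z z'
    have hL : d.Vwls ω z z'
        = if z.1 = z'.1 then (d.Wa z.1 : ℝ)⁻¹ * (d.Wa z'.1 : ℝ)⁻¹ * Qm d ω z z' else 0 :=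
      aux_V_unit h0 h1 hω (d.wgt ω) (fun z => (d.N : ℝ) / nz d Mc0 Mc1 z)
        (fun i => aux_wgt_eq h0 h1 hω i.1 i.2) hβwls (fun _ => (d.N : ℝ))
        (fun _ => aux_N_ne h0 h1 hω) (aux_gram_unit_wgt h0 h1 hω) hvc_wls z z'
    rw [hL, Matrix.diagonal_mul, hVent z z']
    by_cases h : z.1 = z'.1
    · rw [if_pos h, if_pos h, ← h]
      have hWa := aux_Wa_ne (d := d) z.1
      have hWs := aux_Wa_sub_ne (d := d) z.1
      field_simp
    · rw [if_neg h, if_neg h, mul_zero]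
  · -- VagCR
    ext z z'
    have hL : d.VagCR ω z z'
        = if z.1 = z'.1 then (d.Wa z.1 : ℝ)⁻¹ * (d.Wa z'.1 : ℝ)⁻¹ * Qm d ω z z' else 0 :=
      aux_V_ag h0 h1 hω hβag z z'
    rw [hL, Matrix.diagonal_mul, hVent z z']
    by_cases h : z.1 = z'.1
    · rw [if_pos h, if_pos h, ← h]
      have hWa := aux_Wa_ne (d := d) z.1
      have hWs := aux_Wa_sub_ne (d := d) z.1
      field_simp
    · rw [if_neg h, if_neg h, mul_zero]
  · -- fully interacted coefficients
    intro k
    have hc : ∀ k : T ⊕ T × Fin J,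
        (d.N : ℝ) / nz d Mc0 Mc1 (Sum.elim id Prod.fst k) ≠ 0 :=
      fun k => div_ne_zero (aux_N_ne h0 h1 hω) (aux_nz_ne h0 h1 hω _)
    have hX : ∀ (i : d.Idx) (k : T ⊕ T × Fin J), d.DunitL x ω i k ≠ 0 →
        d.wgt ω i = (d.N : ℝ) / nz d Mc0 Mc1 (Sum.elim id Prod.fst k) := by
      intro i k hne
      have hwi : d.wgt ω i = (d.N : ℝ) / nz d Mc0 Mc1 (d.Z ω i.1 i.2) :=
        aux_wgt_eq h0 h1 hω i.1 i.2
      cases k with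
      | inl z =>
          have hz : d.Z ω i.1 i.2 = z := by
            by_contra hzz
            exact hne (by simp [Design.DunitL, hzz])
          rw [hwi, hz]
          rfl
      | inr zj =>
          have hz : d.Z ω i.1 i.2 = zj.1 := by
            by_contra hzz
            exact hne (by simp [Design.DunitL, hzz])
          rw [hwi, hz]
          rfl
    exact (congrFun (aux_lsCoef_group_weights (d.DunitL x ω) (d.Yv ω) (d.wgt ω)
      (fun k => (d.N : ℝ) / nz d Mc0 Mc1 (Sum.elim id Prod.fst k)) hc hX) k).symm

end SplitPlotPaper
end
end

section
/- Consider a general experiment with N units, treatment labels Z_i ∈ {1,…,Q} such that each treatment group is nonempty, observed outcomes Y_i ∈ ℝ, positive weights w_i > 0, and positive scaling factors ρ_i > 0 that depend only on the treatment, i.e. ρ_i = ρ(Z_i) for some function ρ: {1,…,Q} → (0,∞). Then the weighted least-squares fits of Y_i on the Q treatment indicators 1(Z_i=q), q=1,…,Q, with weights (w_i)_{i=1}^N and with weights (w_i·ρ_i)_{i=1}^N yield identical coefficient vectors, identical heteroskedasticity-robust (sandwich) covariance matrices, and identical cluster-robust covariance matrices for any fixed partition of the units into clusters. -/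
open Finset Matrix Filter
open scoped Classical BigOperators

noncomputable section

namespace SplitPlotPaper

/-- The indicator design matrix of a regression on treatment-group indicators. -/
def indicatorDesign {N Q : ℕ} (Z : Fin N → Fin Q) : Matrix (Fin N) (Fin Q) ℝ :=
  Matrix.of fun i q => if Z i = q then 1 else 0

section Aux

variable {N Q : ℕ}

/-- Group total of weights. -/
def grpSum (Z : Fin N → Fin Q) (π : Fin N → ℝ) (q : Fin Q) : ℝ :=
  ∑ i, if Z i = q then π i else 0

lemma gram_indicator (Z : Fin N → Fin Q) (π : Fin N → ℝ) :
    gram (indicatorDesign Z) π = Matrix.diagonal (grpSum Z π) := by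
  ext q q'
  simp only [gram, indicatorDesign, Matrix.of_apply, Matrix.diagonal_apply, grpSum]
  by_cases h : q = q'
  · subst h
    simp only [if_pos rfl]
    apply Finset.sum_congr rfl
    intro i _
    by_cases hi : Z i = q <;> simp [hi]
  · rw [if_neg h]
    apply Finset.sum_eq_zero
    intro i _
    by_cases h1 : Z i = q
    · have h2 : ¬ (Z i = q') := fun h2 => h (h1 ▸ h2)
      simp only [Matrix.diagonal_apply, h1, h2, if_false, mul_zero, if_true]
      simp [h1, h2]
      exact fun hq => absurd hq h
    · simp [h1]

lemma gram_indicator_inv (Z : Fin N → Fin Q) (π : Fin N → ℝ)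
    (h : ∀ q, grpSum Z π q ≠ 0) :
    (gram (indicatorDesign Z) π)⁻¹ = Matrix.diagonal (fun q => (grpSum Z π q)⁻¹) := by
  rw [gram_indicator]
  refine Matrix.inv_eq_right_inv ?_
  rw [Matrix.diagonal_mul_diagonal]
  have h1 : (fun i => grpSum Z π i * (grpSum Z π i)⁻¹) = fun _ => (1 : ℝ) := by
    funext q
    exact mul_inv_cancel₀ (h q)
  rw [h1]
  exact Matrix.diagonal_one

lemma grpSum_pos (Z : Fin N → Fin Q) (π : Fin N → ℝ) (hπ : ∀ i, 0 < π i)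
    (hZ : ∀ q : Fin Q, ∃ i, Z i = q) (q : Fin Q) : 0 < grpSum Z π q := by
  obtain ⟨i0, hi0⟩ := hZ q
  apply Finset.sum_pos'
  · intro i _
    by_cases h : Z i = q <;> simp [h, (hπ i).le]
  · exact ⟨i0, Finset.mem_univ _, by simp [hi0, hπ i0]⟩

lemma grpSum_scale (Z : Fin N → Fin Q) (π : Fin N → ℝ) (ρ : Fin Q → ℝ) (q : Fin Q) :
    grpSum Z (fun i => π i * ρ (Z i)) q = ρ q * grpSum Z π q := by
  simp only [grpSum, Finset.mul_sum]
  apply Finset.sum_congr rfl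
  intro i _
  by_cases h : Z i = q
  · simp [h, mul_comm]
  · simp [h]

lemma lsCoef_indicator (Z : Fin N → Fin Q) (π y : Fin N → ℝ)
    (h : ∀ q, grpSum Z π q ≠ 0) (q : Fin Q) :
    lsCoef (indicatorDesign Z) π y q
      = (grpSum Z π q)⁻¹ * ∑ i, π i * indicatorDesign Z i q * y i := by
  rw [lsCoef, gram_indicator_inv Z π h, Matrix.mulVec_diagonal]

lemma coef_eq (Z : Fin N → Fin Q) (hZ : ∀ q : Fin Q, ∃ i, Z i = q) (Y : Fin N → ℝ)
    (π : Fin N → ℝ) (hπ : ∀ i, 0 < π i)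
    (ρ : Fin Q → ℝ) (hρ : ∀ q, 0 < ρ q) :
    lsCoef (indicatorDesign Z) π Y
      = lsCoef (indicatorDesign Z) (fun i => π i * ρ (Z i)) Y := by
  have h1 : ∀ q, grpSum Z π q ≠ 0 := fun q => (grpSum_pos Z π hπ hZ q).ne'
  have h2 : ∀ q, grpSum Z (fun i => π i * ρ (Z i)) q ≠ 0 := fun q =>
    (grpSum_pos Z _ (fun i => mul_pos (hπ i) (hρ (Z i))) hZ q).ne'
  funext q
  rw [lsCoef_indicator Z π Y h1, lsCoef_indicator Z _ Y h2, grpSum_scale]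
  have hb : ∑ i, (π i * ρ (Z i)) * indicatorDesign Z i q * Y i
      = ρ q * ∑ i, π i * indicatorDesign Z i q * Y i := by
    rw [Finset.mul_sum]
    apply Finset.sum_congr rfl
    intro i _
    by_cases h : Z i = q
    · simp only [indicatorDesign, Matrix.of_apply, if_pos h, h]
      ring
    · simp [indicatorDesign, h]
  rw [hb, mul_inv]
  have hc : (ρ q)⁻¹ * (grpSum Z π q)⁻¹ * (ρ q * ∑ i, π i * indicatorDesign Z i q * Y i)
      = ((ρ q)⁻¹ * ρ q) * ((grpSum Z π q)⁻¹ * ∑ i, π i * indicatorDesign Z i q * Y i) := by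
    ring
  rw [hc, inv_mul_cancel₀ (hρ q).ne', one_mul]

lemma resid_eq (Z : Fin N → Fin Q) (hZ : ∀ q : Fin Q, ∃ i, Z i = q) (Y : Fin N → ℝ)
    (π : Fin N → ℝ) (hπ : ∀ i, 0 < π i)
    (ρ : Fin Q → ℝ) (hρ : ∀ q, 0 < ρ q) (i : Fin N) :
    lsResid (indicatorDesign Z) π Y i
      = lsResid (indicatorDesign Z) (fun i => π i * ρ (Z i)) Y i := by
  rw [lsResid, lsResid, ← coef_eq Z hZ Y π hπ ρ hρ]

lemma scale_cancel (a b c d m : ℝ) (ha : a ≠ 0) (hb : b ≠ 0) :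
    (a * c)⁻¹ * (a * b * m) * (b * d)⁻¹ = c⁻¹ * m * d⁻¹ := by
  rw [mul_inv, mul_inv]
  have h1 : a⁻¹ * a = 1 := inv_mul_cancel₀ ha
  have h2 : b⁻¹ * b = 1 := inv_mul_cancel₀ hb
  calc a⁻¹ * c⁻¹ * (a * b * m) * (b⁻¹ * d⁻¹)
      = (a⁻¹ * a) * (b⁻¹ * b) * (c⁻¹ * m * d⁻¹) := by ring
    _ = c⁻¹ * m * d⁻¹ := by rw [h1, h2, one_mul, one_mul]

lemma hcCov_indicator_apply (Z : Fin N → Fin Q) (π y : Fin N → ℝ)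
    (h : ∀ q, grpSum Z π q ≠ 0) (q q' : Fin Q) :
    hcCov (indicatorDesign Z) π y q q'
      = (grpSum Z π q)⁻¹ *
        (∑ i, (π i) ^ 2 * (lsResid (indicatorDesign Z) π y i) ^ 2 *
          indicatorDesign Z i q * indicatorDesign Z i q') * (grpSum Z π q')⁻¹ := by
  rw [hcCov, gram_indicator_inv Z π h, Matrix.mul_diagonal, Matrix.diagonal_mul,
    Matrix.of_apply]

lemma clusterCov_indicator_apply {γ : Type} [Fintype γ] [DecidableEq γ]
    (Z : Fin N → Fin Q) (π y : Fin N → ℝ) (h : ∀ q, grpSum Z π q ≠ 0)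
    (c : Fin N → γ) (q q' : Fin Q) :
    clusterCov (indicatorDesign Z) π y c q q'
      = (grpSum Z π q)⁻¹ *
        (∑ g : γ,
          (∑ i, if c i = g then π i * indicatorDesign Z i q * lsResid (indicatorDesign Z) π y i else 0) *
          (∑ i, if c i = g then π i * indicatorDesign Z i q' * lsResid (indicatorDesign Z) π y i else 0)) *
        (grpSum Z π q')⁻¹ := by
  rw [clusterCov, gram_indicator_inv Z π h, Matrix.mul_diagonal, Matrix.diagonal_mul,
    Matrix.of_apply]

end Aux

/-- In a general experiment with `N` units, treatment labels
`Z_i ∈ {1,…,Q}` with every group nonempty, outcomes `Y`, positive weights `w_i`, and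
positive treatment-dependent scaling factors `ρ(Z_i)`, the weighted least-squares fits
of `Y` on the treatment indicators with weights `w_i` and with weights `w_i ρ(Z_i)`
yield identical coefficients, identical heteroskedasticity-robust covariance matrices,
and identical cluster-robust covariance matrices for any fixed clustering of the
units. -/
theorem wls_scale_invariance {N Q : ℕ} (Z : Fin N → Fin Q)
    (hZ : ∀ q : Fin Q, ∃ i, Z i = q) (Y : Fin N → ℝ)
    (wgt : Fin N → ℝ) (hw : ∀ i, 0 < wgt i)
    (ρ : Fin Q → ℝ) (hρ : ∀ q, 0 < ρ q) :
    lsCoef (indicatorDesign Z) wgt Y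
        = lsCoef (indicatorDesign Z) (fun i => wgt i * ρ (Z i)) Y ∧
    hcCov (indicatorDesign Z) wgt Y
        = hcCov (indicatorDesign Z) (fun i => wgt i * ρ (Z i)) Y ∧
    ∀ (γ : Type) (_ : Fintype γ) (_ : DecidableEq γ) (c : Fin N → γ),
      clusterCov (indicatorDesign Z) wgt Y c
        = clusterCov (indicatorDesign Z) (fun i => wgt i * ρ (Z i)) Y c := by
  set D := indicatorDesign Z with hD
  have hπ' : ∀ i, 0 < wgt i * ρ (Z i) := fun i => mul_pos (hw i) (hρ (Z i))
  have h1 : ∀ q, grpSum Z wgt q ≠ 0 := fun q => (grpSum_pos Z wgt hw hZ q).ne'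
  have h2 : ∀ q, grpSum Z (fun i => wgt i * ρ (Z i)) q ≠ 0 := fun q =>
    (grpSum_pos Z _ hπ' hZ q).ne'
  have hcoef := coef_eq Z hZ Y wgt hw ρ hρ
  have hres := resid_eq Z hZ Y wgt hw ρ hρ
  refine ⟨hcoef, ?_, ?_⟩
  · ext q q'
    rw [hcCov_indicator_apply Z wgt Y h1, hcCov_indicator_apply Z _ Y h2,
      grpSum_scale, grpSum_scale]
    have hM : (∑ i, (wgt i * ρ (Z i)) ^ 2 *
          (lsResid D (fun i => wgt i * ρ (Z i)) Y i) ^ 2 * D i q * D i q')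
        = ρ q * ρ q' * ∑ i, (wgt i) ^ 2 * (lsResid D wgt Y i) ^ 2 * D i q * D i q' := by
      rw [Finset.mul_sum]
      apply Finset.sum_congr rfl
      intro i _
      rw [← hres]
      by_cases ha : Z i = q
      · by_cases hb : Z i = q'
        · have hq' : ρ q' = ρ q := by rw [← ha, hb]
          simp only [hD, indicatorDesign, Matrix.of_apply, if_pos ha, if_pos hb, ha, hq']
          ring
        · simp [hD, indicatorDesign, hb]
      · simp [hD, indicatorDesign, ha]
    rw [hM]
    exact (scale_cancel (ρ q) (ρ q') (grpSum Z wgt q) (grpSum Z wgt q') _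
      (hρ q).ne' (hρ q').ne').symm
  · intro γ _ _ c
    ext q q'
    rw [clusterCov_indicator_apply Z wgt Y h1 c, clusterCov_indicator_apply Z _ Y h2 c,
      grpSum_scale, grpSum_scale]
    have hA : ∀ (g : γ) (r : Fin Q),
        (∑ i, if c i = g then (wgt i * ρ (Z i)) * D i r *
            lsResid D (fun i => wgt i * ρ (Z i)) Y i else 0)
          = ρ r * ∑ i, if c i = g then wgt i * D i r * lsResid D wgt Y i else 0 := by
      intro g r
      rw [Finset.mul_sum]
      apply Finset.sum_congr rfl
      intro i _
      rw [← hres]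
      by_cases hg : c i = g
      · by_cases ha : Z i = r
        · have hr : ρ (Z i) = ρ r := by rw [ha]
          simp only [if_pos hg, hr]
          ring
        · simp [hD, indicatorDesign, hg, ha]
      · simp [hg]
    have hM : (∑ g : γ,
          (∑ i, if c i = g then (wgt i * ρ (Z i)) * D i q *
              lsResid D (fun i => wgt i * ρ (Z i)) Y i else 0) *
          (∑ i, if c i = g then (wgt i * ρ (Z i)) * D i q' *
              lsResid D (fun i => wgt i * ρ (Z i)) Y i else 0))
        = ρ q * ρ q' * ∑ g : γ,
            (∑ i, if c i = g then wgt i * D i q * lsResid D wgt Y i else 0) *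
            (∑ i, if c i = g then wgt i * D i q' * lsResid D wgt Y i else 0) := by
      rw [Finset.mul_sum]
      apply Finset.sum_congr rfl
      intro g _
      rw [hA g q, hA g q']
      ring
    rw [hM]
    exact (scale_cancel (ρ q) (ρ q') (grpSum Z wgt q) (grpSum Z wgt q') _
      (hρ q).ne' (hρ q').ne').symm

end SplitPlotPaper
end
end
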